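/- arXiv:2412.01668 — 5 statements merged into one kernel-verified Lean document; each statement's English description precedes it below -/
import Mathlib

section
/- Let d ≥ 7 be an integer with d ≡ 1 (mod 6), and let R = (d+1)/2. Then the integer point (R+1, −R+1) is periodic for the Hénon map h_d(x,y) = (y, −x + s_d(y)) with exact (minimal) period (8d+10)/3. In particular h_d has a cycle of integer points of length (8d+10)/3. -/
/-- The polynomial `c_d` over `ℚ`. -/
def cQ (d : ℕ) (x : ℚ) : ℚ :=
  if d % 2 = 0 then
    (1 / (d.factorial : ℚ)) * ∏ i ∈ Finset.Icc 1 (d / 2), (x ^ 2 - ((2 * (i : ℚ) - 1) / 2) ^ 2)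
  else
    (1 / (d.factorial : ℚ)) * x * ∏ i ∈ Finset.Icc 1 (d / 2), (x ^ 2 - (i : ℚ) ^ 2)

/-- The polynomial `s_d` over `ℚ`. -/
def sQ (d : ℕ) (x : ℚ) : ℚ :=
  ∑ j ∈ Finset.range (d / 2 + 1), (-1 : ℚ) ^ (d / 2 - j) * cQ (2 * j + d % 2) x

/-- The Hénon map `h_d(x,y) = (y, −x + s_d(y))` on `ℚ²`. -/
def henonQ (d : ℕ) (P : ℚ × ℚ) : ℚ × ℚ := (P.2, -P.1 + sQ d P.2)

def Qp (m : ℕ) (x : ℚ) : ℚ := ∏ i ∈ Finset.Icc 1 m, (x ^ 2 - (i : ℚ) ^ 2)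

lemma Qp_neg (m : ℕ) (x : ℚ) : Qp m (-x) = Qp m x := by simp [Qp]

lemma Qp_succ (m : ℕ) (x : ℚ) : Qp (m+1) x = Qp m x * (x ^ 2 - ((m:ℚ)+1) ^ 2) := by
  rw [Qp, Qp, Finset.prod_Icc_succ_top (by omega)]
  push_cast; ring

lemma shiftP (m : ℕ) (x : ℚ) :
    (x+1) * Qp (m+1) (x+1) = x * Qp m x * (x + m + 1) * (x + m + 2) := by
  induction m with
  | zero => simp [Qp, Finset.Icc_self]; ring
  | succ n ih =>
    rw [Qp_succ (n+1) (x+1), Qp_succ n x]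
    push_cast
    linear_combination ((x+1)^2 - ((n:ℚ)+1+1)^2) * ih

lemma shiftM (m : ℕ) (x : ℚ) :
    (x-1) * Qp (m+1) (x-1) = x * Qp m x * (x - m - 1) * (x - m - 2) := by
  have h := shiftP m (-x)
  rw [show (-x)+1 = -(x-1) from by ring, Qp_neg, Qp_neg] at h
  linear_combination -h

lemma cQ_odd (j : ℕ) (x : ℚ) :
    cQ (2*j+1) x = (1/((2*j+1).factorial : ℚ)) * x * Qp j x := by
  have h1 : (2*j+1) / 2 = j := by omega
  rw [cQ, if_neg (by omega), h1]; rfl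

lemma cQ_odd_mul (j : ℕ) (x : ℚ) :
    ((2*j+1).factorial : ℚ) * cQ (2*j+1) x = x * Qp j x := by
  have hne : ((2*j+1).factorial : ℚ) ≠ 0 := Nat.cast_ne_zero.2 (Nat.factorial_ne_zero _)
  rw [cQ_odd]; field_simp

lemma key (j : ℕ) (x : ℚ) :
    cQ (2*(j+1)+1) (x+1) + cQ (2*(j+1)+1) (x-1) = 2 * cQ (2*(j+1)+1) x + cQ (2*j+1) x := by
  have hf : ((2*(j+1)+1).factorial : ℚ) = ((2*j+1).factorial : ℚ) * ((2*(j:ℚ)+2) * (2*(j:ℚ)+3)) := by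
    rw [show 2*(j+1)+1 = (2*j+1)+1+1 from by ring, Nat.factorial_succ, Nat.factorial_succ]
    push_cast; ring
  have main : (x+1) * Qp (j+1) (x+1) + (x-1) * Qp (j+1) (x-1)
      = 2*x*Qp (j+1) x + ((2*(j:ℚ)+2)*(2*(j:ℚ)+3))*(x * Qp j x) := by
    linear_combination shiftP j x + shiftM j x - 2*x*(Qp_succ j x)
  have H1 := cQ_odd_mul (j+1) (x+1)
  have H2 := cQ_odd_mul (j+1) (x-1)
  have H3 := cQ_odd_mul (j+1) x
  have H4 := cQ_odd_mul j x
  have hne : ((2*(j+1)+1).factorial : ℚ) ≠ 0 := Nat.cast_ne_zero.2 (Nat.factorial_ne_zero _)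
  apply mul_left_cancel₀ hne
  linear_combination H1 + H2 + main - 2*H3 - ((2*(j:ℚ)+2)*(2*(j:ℚ)+3))*H4
    - (cQ (2*j+1) x) * hf

lemma sQ_odd (k : ℕ) (x : ℚ) :
    sQ (2*k+1) x = ∑ j ∈ Finset.range (k+1), (-1:ℚ)^(k-j) * cQ (2*j+1) x := by
  have h1 : (2*k+1) / 2 = k := by omega
  have h2 : (2*k+1) % 2 = 1 := by omega
  simp only [sQ, h1, h2]

lemma sQ_succ (k : ℕ) (x : ℚ) :
    sQ (2*(k+1)+1) x = cQ (2*(k+1)+1) x - sQ (2*k+1) x := by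
  rw [sQ_odd (k+1), sQ_odd k, Finset.sum_range_succ]
  have h : ∀ j ∈ Finset.range (k+1),
      (-1:ℚ)^(k+1-j) * cQ (2*j+1) x = -((-1:ℚ)^(k-j) * cQ (2*j+1) x) := by
    intro j hj
    simp only [Finset.mem_range] at hj
    rw [show k+1-j = (k-j)+1 from by omega, pow_succ]
    ring
  rw [Finset.sum_congr rfl h, Finset.sum_neg_distrib]
  simp
  ring

lemma cQ_one (x : ℚ) : cQ 1 x = x := by
  have h := cQ_odd 0 x
  norm_num at h
  rw [h]
  simp [Qp]

lemma sQ_one (x : ℚ) : sQ 1 x = x := by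
  have h := sQ_odd 0 x
  norm_num at h
  rw [h, cQ_one]

lemma FE (k : ℕ) (x : ℚ) :
    sQ (2*k+1) (x+1) + sQ (2*k+1) (x-1) = sQ (2*k+1) x + cQ (2*k+1) x := by
  induction k with
  | zero =>
    norm_num [sQ_one, cQ_one]
  | succ n ih =>
    rw [sQ_succ n (x+1), sQ_succ n (x-1), sQ_succ n x]
    linear_combination key n x - ih

lemma cQ_vanish (k n : ℕ) (h : n ≤ k) : cQ (2*k+1) ((n:ℚ)) = 0 := by
  rcases Nat.eq_zero_or_pos n with h0 | h0
  · subst h0; rw [cQ_odd]; simp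
  · rw [cQ_odd]
    have : Qp k ((n:ℚ)) = 0 :=
      Finset.prod_eq_zero (Finset.mem_Icc.2 ⟨h0, h⟩) (by ring)
    rw [this, mul_zero]

lemma cQ_top (k : ℕ) : cQ (2*k+1) ((k:ℚ)+1) = 1 := by
  have keyk : ∀ k : ℕ, ((k:ℚ)+1) * Qp k ((k:ℚ)+1) = ((2*k+1).factorial : ℚ) := by
    intro k
    induction k with
    | zero => simp [Qp]
    | succ n ih =>
      have h := shiftP n ((n:ℚ)+1)
      have hfact : ((2*(n+1)+1).factorial : ℚ)
          = ((2*n+1).factorial : ℚ) * ((2*(n:ℚ)+2) * (2*(n:ℚ)+3)) := by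
        rw [show 2*(n+1)+1 = (2*n+1)+1+1 from by ring, Nat.factorial_succ, Nat.factorial_succ]
        push_cast; ring
      push_cast
      rw [hfact]
      linear_combination h + ((2*(n:ℚ)+2)*(2*(n:ℚ)+3))*ih
  have hne : ((2*k+1).factorial : ℚ) ≠ 0 := Nat.cast_ne_zero.2 (Nat.factorial_ne_zero _)
  rw [cQ_odd]
  rw [mul_assoc]
  rw [keyk k]
  field_simp

lemma sQ_neg (k : ℕ) (x : ℚ) : sQ (2*k+1) (-x) = - sQ (2*k+1) x := by
  rw [sQ_odd, sQ_odd, ← Finset.sum_neg_distrib]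
  refine Finset.sum_congr rfl ?_
  intro j _
  rw [cQ_odd, cQ_odd, Qp_neg]
  ring

def TN (n : ℕ) : ℚ :=
  if n % 6 = 0 then 0 else if n % 6 = 1 then 1 else if n % 6 = 2 then 1
  else if n % 6 = 3 then 0 else if n % 6 = 4 then -1 else -1

lemma Trec (n : ℕ) : TN (n+2) = TN (n+1) - TN n := by
  rcases (by omega : n % 6 = 0 ∨ n % 6 = 1 ∨ n % 6 = 2 ∨ n % 6 = 3 ∨ n % 6 = 4 ∨ n % 6 = 5)
    with h|h|h|h|h|h <;>
  · have h1 : (n+1) % 6 = (n % 6 + 1) % 6 := by omega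
    have h2 : (n+2) % 6 = (n % 6 + 2) % 6 := by omega
    norm_num [TN, h, h1, h2]

lemma sval_nat (k : ℕ) (n : ℕ) (hn : n ≤ k+1) :
    sQ (2*k+1) ((n:ℚ)) = (-1:ℚ)^k * TN n := by
  have base0 : sQ (2*k+1) ((0:ℕ):ℚ) = 0 := by
    rw [sQ_odd]
    apply Finset.sum_eq_zero
    intro j _
    rw [cQ_odd]
    simp
  have base1 : sQ (2*k+1) ((1:ℕ):ℚ) = (-1:ℚ)^k := by
    rw [sQ_odd, Finset.sum_eq_single 0]
    · rw [show 2*0+1 = 1 from rfl, cQ_one]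
      norm_num
    · intro j hj hj0
      rw [cQ_odd]
      have : Qp j (((1:ℕ)):ℚ) = 0 := by
        apply Finset.prod_eq_zero (Finset.mem_Icc.2 ⟨le_refl 1, by omega⟩)
        norm_num
      rw [this]
      ring
    · intro h
      exact absurd (Finset.mem_range.2 (by omega)) h
  have main : ∀ p : ℕ, p + 1 ≤ k + 1 →
      sQ (2*k+1) ((p:ℚ)) = (-1:ℚ)^k * TN p ∧
      sQ (2*k+1) (((p+1:ℕ)):ℚ) = (-1:ℚ)^k * TN (p+1) := by
    intro p
    induction p with
    | zero =>
      intro _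
      constructor
      · rw [show ((0:ℕ):ℚ) = ((0:ℕ):ℚ) from rfl, base0]; norm_num [TN]
      · rw [base1]; norm_num [TN]
    | succ q ih =>
      intro h
      have hprev := ih (by omega)
      refine ⟨hprev.2, ?_⟩
      have hFE := FE k (((q+1:ℕ)):ℚ)
      have hc : cQ (2*k+1) (((q+1:ℕ)):ℚ) = 0 := cQ_vanish k (q+1) (by omega)
      have e1 : (((q+1:ℕ)):ℚ) + 1 = (((q+2:ℕ)):ℚ) := by push_cast; ring
      have e2 : (((q+1:ℕ)):ℚ) - 1 = ((q:ℕ):ℚ) := by push_cast; ring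
      rw [e1, e2, hc, hprev.1, hprev.2] at hFE
      have hT := Trec q
      rw [show q+1+1 = q+2 from rfl, hT]
      linear_combination hFE
  rcases Nat.eq_zero_or_pos n with h0 | h0
  · subst h0; rw [base0]; norm_num [TN]
  · obtain ⟨p, rfl⟩ : ∃ p, n = p + 1 := ⟨n - 1, by omega⟩
    exact (main p (by omega)).2

def T6Z (j : ℤ) : ℚ :=
  if j % 6 = 0 then 0 else if j % 6 = 1 then 1 else if j % 6 = 2 then 1
  else if j % 6 = 3 then 0 else if j % 6 = 4 then -1 else -1

lemma sQ_neg' (m : ℕ) (x : ℚ) : sQ (6*m+1) (-x) = - sQ (6*m+1) x := by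
  have h := sQ_neg (3*m) x
  rwa [show 2*(3*m)+1 = 6*m+1 from by ring] at h

lemma sval_m (m : ℕ) (n : ℕ) (hn : n ≤ 3*m+1) :
    sQ (6*m+1) ((n:ℚ)) = (-1:ℚ)^m * TN n := by
  have h := sval_nat (3*m) n (by omega)
  rw [show 2*(3*m)+1 = 6*m+1 from by ring] at h
  rw [h, pow_mul]
  norm_num

lemma sval_int (m : ℕ) (j : ℤ) (hj : j.natAbs ≤ 3*m+1) :
    sQ (6*m+1) ((j:ℚ)) = (-1:ℚ)^m * T6Z j := by
  have TNeq : ∀ n : ℕ, T6Z (n:ℤ) = TN n := by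
    intro n
    rcases (by omega : n % 6 = 0 ∨ n % 6 = 1 ∨ n % 6 = 2 ∨ n % 6 = 3 ∨ n % 6 = 4 ∨ n % 6 = 5)
      with h|h|h|h|h|h <;>
    · have hz : (n:ℤ) % 6 = (n % 6 : ℕ) := by omega
      norm_num [T6Z, TN, h, hz]
  rcases Int.eq_nat_or_neg j with ⟨n, rfl | rfl⟩
  · rw [show ((n:ℤ):ℚ) = (n:ℚ) from by push_cast; rfl, sval_m m n (by omega), TNeq]
  · have hn : n ≤ 3*m+1 := by omega
    rw [Int.cast_neg, Int.cast_natCast, sQ_neg', sval_m m n hn]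
    have : T6Z (-(n:ℤ)) = - TN n := by
      rcases (by omega : n % 6 = 0 ∨ n % 6 = 1 ∨ n % 6 = 2 ∨ n % 6 = 3 ∨ n % 6 = 4 ∨ n % 6 = 5)
        with h|h|h|h|h|h <;>
      · have hz : (-(n:ℤ)) % 6 = ((6 - n % 6) % 6 : ℕ) := by omega
        norm_num [T6Z, TN, h, hz]
    rw [this]
    ring

lemma neg_one_pow_even {m : ℕ} (h : m % 2 = 0) : ((-1:ℚ))^m = 1 :=
  Even.neg_one_pow (Nat.even_iff.2 h)

lemma neg_one_pow_odd {m : ℕ} (h : m % 2 = 1) : ((-1:ℚ))^m = -1 :=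
  Odd.neg_one_pow (Nat.odd_iff.2 h)

/-- s(3j) = 0 for |3j| ≤ 3m+1 -/
lemma V0 (m : ℕ) (j : ℤ) (hj : j.natAbs ≤ m) : sQ (6*m+1) (((3*j : ℤ)):ℚ) = 0 := by
  rw [sval_int m (3*j) (by omega)]
  rcases (by omega : (3*j) % 6 = 0 ∨ (3*j) % 6 = 3) with h|h <;> simp [T6Z, h]

/-- s(±(3m+1)) = ±1 -/
lemma V1 (m : ℕ) : sQ (6*m+1) (((3*(m:ℤ)+1 : ℤ)):ℚ) = 1 := by
  rw [sval_int m _ (by omega)]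
  rcases (by omega : m % 2 = 0 ∨ m % 2 = 1) with h|h
  · have h6 : (3*(m:ℤ)+1) % 6 = 1 := by omega
    rw [neg_one_pow_even h]; simp only [T6Z, h6]; norm_num
  · have h6 : (3*(m:ℤ)+1) % 6 = 4 := by omega
    rw [neg_one_pow_odd h]; simp only [T6Z, h6]; norm_num

/-- s(3m+2) = 2 -/
lemma V2 (m : ℕ) : sQ (6*m+1) (((3*(m:ℤ)+2 : ℤ)):ℚ) = 2 := by
  have hFE := FE (3*m) (((3*m+1 : ℕ)):ℚ)
  rw [show 2*(3*m)+1 = 6*m+1 from by ring] at hFE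
  have hc : cQ (2*(3*m)+1) ((((3*m : ℕ)):ℚ) + 1) = 1 := cQ_top (3*m)
  rw [show 2*(3*m)+1 = 6*m+1 from by ring] at hc
  have e0 : (((3*m+1 : ℕ)):ℚ) = ((3*m : ℕ):ℚ) + 1 := by push_cast; ring
  have e1 : (((3*m+1 : ℕ)):ℚ) + 1 = (((3*(m:ℤ)+2 : ℤ)):ℚ) := by push_cast; ring
  have e2 : (((3*m+1 : ℕ)):ℚ) - 1 = (((3*(m:ℤ) : ℤ)):ℚ) := by push_cast; ring
  have h1 : sQ (6*m+1) (((3*m+1 : ℕ)):ℚ) = 1 := by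
    have := V1 m
    rw [show (((3*(m:ℤ)+1 : ℤ)):ℚ) = (((3*m+1 : ℕ)):ℚ) from by push_cast; ring] at this
    exact this
  have h0 : sQ (6*m+1) (((3*(m:ℤ) : ℤ)):ℚ) = 0 := by
    have := V0 m m (by omega)
    rwa [show (3*(m:ℤ)) = (3*(m:ℤ)) from rfl] at this
  rw [e1, e2, h1, h0] at hFE
  rw [e0] at hFE
  rw [hc] at hFE
  linarith [hFE]

/-- s(-(3m+2)) = -2 -/
lemma V2' (m : ℕ) : sQ (6*m+1) (((-(3*(m:ℤ)+2) : ℤ)):ℚ) = -2 := by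
  rw [Int.cast_neg, sQ_neg', V2]

/-- s(-(3m+1)) = -1 -/
lemma V1' (m : ℕ) : sQ (6*m+1) (((-(3*(m:ℤ)+1) : ℤ)):ℚ) = -1 := by
  rw [Int.cast_neg, sQ_neg', V1]

lemma Vbe (m r : ℕ) (hr : (r:ℤ) ≤ 2*m-1) (hre : r % 2 = 0) :
    sQ (6*m+1) (((-3*((r:ℤ)-m)-2 : ℤ)):ℚ) = -1 := by
  rw [sval_int m _ (by omega)]
  rcases (by omega : m % 2 = 0 ∨ m % 2 = 1) with h|h
  · have h6 : (-3*((r:ℤ)-m)-2) % 6 = 4 := by omega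
    rw [neg_one_pow_even h]; simp only [T6Z, h6]; norm_num
  · have h6 : (-3*((r:ℤ)-m)-2) % 6 = 1 := by omega
    rw [neg_one_pow_odd h]; simp only [T6Z, h6]; norm_num

lemma Vbo (m r : ℕ) (hr : (r:ℤ) ≤ 2*m-1) (hre : r % 2 = 1) :
    sQ (6*m+1) (((-3*((r:ℤ)-m)-1 : ℤ)):ℚ) = 1 := by
  rw [sval_int m _ (by omega)]
  rcases (by omega : m % 2 = 0 ∨ m % 2 = 1) with h|h
  · have h6 : (-3*((r:ℤ)-m)-1) % 6 = 2 := by omega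
    rw [neg_one_pow_even h]; simp only [T6Z, h6]; norm_num
  · have h6 : (-3*((r:ℤ)-m)-1) % 6 = 5 := by omega
    rw [neg_one_pow_odd h]; simp only [T6Z, h6]; norm_num

/-- the orbit coordinate sequence -/
def orbX (m t : ℕ) : ℤ :=
  if t % 4 = 0 then (if (t/4) % 2 = 0 then 3*m+2 else 3*m+1)
  else if t % 4 = 1 then 3*(((t/4 : ℕ) : ℤ) - m)
  else if t % 4 = 2 then (if (t/4) % 2 = 0 then -(3*(m:ℤ)+2) else -(3*(m:ℤ)+1))
  else -3*(((t/4 : ℕ) : ℤ) - m) - (if (t/4) % 2 = 0 then 2 else 1)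

lemma orbX_eval (m t : ℕ) (r u : ℕ) (ht : t = 4*r + u) (hu : u < 4) :
    orbX m t = if u = 0 then (if r % 2 = 0 then (3*(m:ℤ)+2) else (3*(m:ℤ)+1))
      else if u = 1 then 3*((r:ℤ) - m)
      else if u = 2 then (if r % 2 = 0 then -(3*(m:ℤ)+2) else -(3*(m:ℤ)+1))
      else -3*((r:ℤ) - m) - (if r % 2 = 0 then 2 else 1) := by
  have h4 : t % 4 = u := by omega
  have hd : t / 4 = r := by omega
  rw [orbX, h4, hd]

lemma stepL (m t : ℕ) (ht : t ≤ 8*m+1) :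
    ((orbX m (t+2) : ℤ) : ℚ) = -((orbX m t : ℤ) : ℚ) + sQ (6*m+1) ((orbX m (t+1) : ℤ) : ℚ) := by
  obtain ⟨r, u, hu4, ht4⟩ : ∃ r u, u < 4 ∧ t = 4*r + u := ⟨t/4, t%4, by omega, by omega⟩
  interval_cases u
  -- u = 0
  · rw [orbX_eval m t r 0 (by omega) (by norm_num),
        orbX_eval m (t+1) r 1 (by omega) (by norm_num),
        orbX_eval m (t+2) r 2 (by omega) (by norm_num)]
    simp only [reduceIte, Nat.one_ne_zero, Nat.succ_ne_self, show (1:ℕ) ≠ 0 from by omega,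
      show (2:ℕ) ≠ 0 from by omega, show (2:ℕ) ≠ 1 from by omega, if_false, if_true]
    rw [V0 m ((r:ℤ)-m) (by omega)]
    rcases (by omega : r % 2 = 0 ∨ r % 2 = 1) with h|h <;> simp only [h, Nat.one_ne_zero, if_false, eq_self_iff_true, if_true] <;>
      push_cast <;> ring
  -- u = 1
  · rw [orbX_eval m t r 1 (by omega) (by norm_num),
        orbX_eval m (t+1) r 2 (by omega) (by norm_num),
        orbX_eval m (t+2) r 3 (by omega) (by norm_num)]
    simp only [reduceIte, show (1:ℕ) ≠ 0 from by omega, show (2:ℕ) ≠ 0 from by omega,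
      show (2:ℕ) ≠ 1 from by omega, show (3:ℕ) ≠ 0 from by omega, show (3:ℕ) ≠ 1 from by omega,
      show (3:ℕ) ≠ 2 from by omega, if_false, if_true]
    rcases (by omega : r % 2 = 0 ∨ r % 2 = 1) with h|h <;> simp only [h, Nat.one_ne_zero, if_false, eq_self_iff_true, if_true]
    · rw [V2' m]; push_cast; ring
    · rw [V1' m]; push_cast; ring
  -- u = 2
  · rw [orbX_eval m t r 2 (by omega) (by norm_num),
        orbX_eval m (t+1) r 3 (by omega) (by norm_num),
        orbX_eval m (t+2) (r+1) 0 (by omega) (by norm_num)]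
    simp only [reduceIte, show (2:ℕ) ≠ 0 from by omega, show (2:ℕ) ≠ 1 from by omega,
      show (3:ℕ) ≠ 0 from by omega, show (3:ℕ) ≠ 1 from by omega,
      show (3:ℕ) ≠ 2 from by omega, if_false, if_true]
    have hr : (r:ℤ) ≤ 2*m-1 := by omega
    rcases (by omega : r % 2 = 0 ∨ r % 2 = 1) with h|h
    · have h1 : (r+1) % 2 = 1 := by omega
      simp only [h, h1, Nat.one_ne_zero, if_false, eq_self_iff_true, if_true]
      rw [Vbe m r hr h]; push_cast; ring
    · have h1 : (r+1) % 2 = 0 := by omega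
      simp only [h, h1, Nat.one_ne_zero, if_false, eq_self_iff_true, if_true]
      rw [Vbo m r hr h]; push_cast; ring
  -- u = 3
  · rw [orbX_eval m t r 3 (by omega) (by norm_num),
        orbX_eval m (t+1) (r+1) 0 (by omega) (by norm_num),
        orbX_eval m (t+2) (r+1) 1 (by omega) (by norm_num)]
    simp only [reduceIte, show (3:ℕ) ≠ 0 from by omega, show (3:ℕ) ≠ 1 from by omega,
      show (3:ℕ) ≠ 2 from by omega, show (1:ℕ) ≠ 0 from by omega, if_false, if_true]
    rcases (by omega : r % 2 = 0 ∨ r % 2 = 1) with h|h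
    · have h1 : (r+1) % 2 = 1 := by omega
      simp only [h, h1, Nat.one_ne_zero, if_false, eq_self_iff_true, if_true]
      rw [V1 m]; push_cast; ring
    · have h1 : (r+1) % 2 = 0 := by omega
      simp only [h, h1, Nat.one_ne_zero, if_false, eq_self_iff_true, if_true]
      rw [V2 m]; push_cast; ring

lemma henon_neg (m : ℕ) (P : ℚ × ℚ) : henonQ (6*m+1) (-P) = - henonQ (6*m+1) P := by
  simp only [henonQ, Prod.fst_neg, Prod.snd_neg, sQ_neg', Prod.neg_mk]
  simp only [Prod.mk.injEq]
  exact ⟨trivial, by ring⟩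

lemma henon_iter_neg (m n : ℕ) (P : ℚ × ℚ) :
    (henonQ (6*m+1))^[n] (-P) = - (henonQ (6*m+1))^[n] P := by
  induction n with
  | zero => simp
  | succ n ih => rw [Function.iterate_succ_apply', Function.iterate_succ_apply', ih, henon_neg]

lemma orbit (m : ℕ) (t : ℕ) (ht : t ≤ 8*m+2) :
    (henonQ (6*m+1))^[t] (((orbX m 0 : ℤ):ℚ), ((orbX m 1 : ℤ):ℚ))
      = (((orbX m t : ℤ):ℚ), ((orbX m (t+1) : ℤ):ℚ)) := by
  induction t with
  | zero => rfl
  | succ n ih =>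
    rw [Function.iterate_succ_apply', ih (by omega)]
    have hs := stepL m n (by omega)
    simp only [henonQ]
    rw [hs]

lemma hX0 (m : ℕ) : orbX m 0 = 3*(m:ℤ)+2 := by
  rw [orbX_eval m 0 0 0 (by omega) (by omega)]
  norm_num

lemma hX1 (m : ℕ) : orbX m 1 = -3*(m:ℤ) := by
  rw [orbX_eval m 1 0 1 (by omega) (by omega)]
  norm_num

lemma orb_ne (m t : ℕ) (ht : t ≤ 8*m+2) (h1 : 1 ≤ t) :
    ¬(orbX m t = 3*(m:ℤ)+2 ∧ orbX m (t+1) = -3*(m:ℤ)) := by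
  obtain ⟨r, u, hu4, ht4⟩ : ∃ r u, u < 4 ∧ t = 4*r + u := ⟨t/4, t%4, by omega, by omega⟩
  rintro ⟨e1, e2⟩
  interval_cases u
  · rw [orbX_eval m t r 0 (by omega) (by norm_num)] at e1
    rw [orbX_eval m (t+1) r 1 (by omega) (by norm_num)] at e2
    simp only [Nat.one_ne_zero, show (2:ℕ) ≠ 0 from by omega, show (2:ℕ) ≠ 1 from by omega, show (3:ℕ) ≠ 0 from by omega, show (3:ℕ) ≠ 1 from by omega, show (3:ℕ) ≠ 2 from by omega, if_false, eq_self_iff_true, if_true] at e1 e2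
    rcases (by omega : r % 2 = 0 ∨ r % 2 = 1) with h|h <;>
      simp only [h, Nat.one_ne_zero, show (2:ℕ) ≠ 0 from by omega, show (2:ℕ) ≠ 1 from by omega, show (3:ℕ) ≠ 0 from by omega, show (3:ℕ) ≠ 1 from by omega, show (3:ℕ) ≠ 2 from by omega, if_false, eq_self_iff_true, if_true] at e1 <;> omega
  · rw [orbX_eval m t r 1 (by omega) (by norm_num)] at e1
    omega
  · rw [orbX_eval m t r 2 (by omega) (by norm_num)] at e1
    rcases (by omega : r % 2 = 0 ∨ r % 2 = 1) with h|h <;>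
      simp only [h, Nat.one_ne_zero, show (2:ℕ) ≠ 0 from by omega, show (2:ℕ) ≠ 1 from by omega, show (3:ℕ) ≠ 0 from by omega, show (3:ℕ) ≠ 1 from by omega, show (3:ℕ) ≠ 2 from by omega, if_false, eq_self_iff_true, if_true] at e1 <;> omega
  · rw [orbX_eval m t r 3 (by omega) (by norm_num)] at e1
    rcases (by omega : r % 2 = 0 ∨ r % 2 = 1) with h|h <;>
      simp only [h, Nat.one_ne_zero, show (2:ℕ) ≠ 0 from by omega, show (2:ℕ) ≠ 1 from by omega, show (3:ℕ) ≠ 0 from by omega, show (3:ℕ) ≠ 1 from by omega, show (3:ℕ) ≠ 2 from by omega, if_false, eq_self_iff_true, if_true] at e1 <;> omega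

lemma orb_ne' (m t : ℕ) (ht : t ≤ 8*m+2) :
    ¬(orbX m t = -(3*(m:ℤ)+2) ∧ orbX m (t+1) = 3*(m:ℤ)) := by
  obtain ⟨r, u, hu4, ht4⟩ : ∃ r u, u < 4 ∧ t = 4*r + u := ⟨t/4, t%4, by omega, by omega⟩
  rintro ⟨e1, e2⟩
  interval_cases u
  · rw [orbX_eval m t r 0 (by omega) (by norm_num)] at e1
    rcases (by omega : r % 2 = 0 ∨ r % 2 = 1) with h|h <;>
      simp only [h, Nat.one_ne_zero, show (2:ℕ) ≠ 0 from by omega, show (2:ℕ) ≠ 1 from by omega, show (3:ℕ) ≠ 0 from by omega, show (3:ℕ) ≠ 1 from by omega, show (3:ℕ) ≠ 2 from by omega, if_false, eq_self_iff_true, if_true] at e1 <;> omega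
  · rw [orbX_eval m t r 1 (by omega) (by norm_num)] at e1
    omega
  · rw [orbX_eval m t r 2 (by omega) (by norm_num)] at e1
    rw [orbX_eval m (t+1) r 3 (by omega) (by norm_num)] at e2
    rcases (by omega : r % 2 = 0 ∨ r % 2 = 1) with h|h <;>
      simp only [h, Nat.one_ne_zero, show (2:ℕ) ≠ 0 from by omega, show (2:ℕ) ≠ 1 from by omega, show (3:ℕ) ≠ 0 from by omega, show (3:ℕ) ≠ 1 from by omega, show (3:ℕ) ≠ 2 from by omega, if_false, eq_self_iff_true, if_true] at e1 e2 <;> omega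
  · rw [orbX_eval m t r 3 (by omega) (by norm_num)] at e1
    rcases (by omega : r % 2 = 0 ∨ r % 2 = 1) with h|h <;>
      simp only [h, Nat.one_ne_zero, show (2:ℕ) ≠ 0 from by omega, show (2:ℕ) ≠ 1 from by omega, show (3:ℕ) ≠ 0 from by omega, show (3:ℕ) ≠ 1 from by omega, show (3:ℕ) ≠ 2 from by omega, if_false, eq_self_iff_true, if_true] at e1 <;> omega

lemma half (m : ℕ) :
    (henonQ (6*m+1))^[8*m+3] (((orbX m 0 : ℤ):ℚ), ((orbX m 1 : ℤ):ℚ))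
      = -(((orbX m 0 : ℤ):ℚ), ((orbX m 1 : ℤ):ℚ)) := by
  rw [show 8*m+3 = (8*m+2)+1 from by omega, Function.iterate_succ_apply',
    orbit m (8*m+2) le_rfl]
  have hA : orbX m (8*m+2) = -(3*(m:ℤ)+2) := by
    rw [orbX_eval m (8*m+2) (2*m) 2 (by omega) (by omega)]
    have h : (2*m) % 2 = 0 := by omega
    simp only [h, Nat.one_ne_zero, show (2:ℕ) ≠ 0 from by omega, show (2:ℕ) ≠ 1 from by omega, show (3:ℕ) ≠ 0 from by omega, show (3:ℕ) ≠ 1 from by omega, show (3:ℕ) ≠ 2 from by omega, if_false, eq_self_iff_true, if_true]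
  have hB : orbX m (8*m+3) = -(3*(m:ℤ)+2) := by
    rw [orbX_eval m (8*m+3) (2*m) 3 (by omega) (by omega)]
    have h : (2*m) % 2 = 0 := by omega
    simp only [h, Nat.one_ne_zero, show (2:ℕ) ≠ 0 from by omega, show (2:ℕ) ≠ 1 from by omega, show (3:ℕ) ≠ 0 from by omega, show (3:ℕ) ≠ 1 from by omega, show (3:ℕ) ≠ 2 from by omega, if_false, eq_self_iff_true, if_true]
    push_cast; ring
  simp only [henonQ, hA, hB, hX0, hX1, Prod.neg_mk]
  rw [V2' m]
  simp only [Prod.mk.injEq]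
  constructor <;> push_cast <;> ring

/-- For `d ≡ 1 (mod 6)`, `d ≥ 7`, with `R = (d+1)/2`, the integer point `(R+1, −R+1)` is
periodic for `h_d` with exact (minimal) period `(8d+10)/3`. -/
theorem henon_long_cycle (d : ℕ) (hd : d % 6 = 1) (hd7 : 7 ≤ d) :
    (henonQ d)^[(8 * d + 10) / 3] ((((d : ℚ) + 1) / 2) + 1, -(((d : ℚ) + 1) / 2) + 1)
        = ((((d : ℚ) + 1) / 2) + 1, -(((d : ℚ) + 1) / 2) + 1) ∧
      ∀ m : ℕ, 1 ≤ m → m < (8 * d + 10) / 3 →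
        (henonQ d)^[m] ((((d : ℚ) + 1) / 2) + 1, -(((d : ℚ) + 1) / 2) + 1)
          ≠ ((((d : ℚ) + 1) / 2) + 1, -(((d : ℚ) + 1) / 2) + 1) := by
  obtain ⟨m, rfl⟩ : ∃ m, d = 6*m+1 := ⟨d/6, by omega⟩
  have hm : 1 ≤ m := by omega
  rw [show (8 * (6*m+1) + 10) / 3 = 16*m+6 from by omega]
  rw [show (((((6*m+1:ℕ) : ℚ) + 1) / 2) + 1, -((((6*m+1:ℕ) : ℚ) + 1) / 2) + 1)
      = (((orbX m 0 : ℤ):ℚ), ((orbX m 1 : ℤ):ℚ)) from by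
    rw [hX0, hX1]; simp only [Prod.mk.injEq]; constructor <;> push_cast <;> ring]
  constructor
  · rw [show 16*m+6 = (8*m+3)+(8*m+3) from by omega, Function.iterate_add_apply,
      half m, henon_iter_neg, half m, neg_neg]
  · intro n hn1 hn2 heq
    rcases (by omega : n ≤ 8*m+2 ∨ (8*m+3 ≤ n ∧ n ≤ 16*m+5)) with hc | ⟨hc1, hc2⟩
    · rw [orbit m n hc] at heq
      simp only [Prod.mk.injEq] at heq
      refine orb_ne m n hc hn1 ⟨?_, ?_⟩
      · have := heq.1; rw [hX0] at this; exact_mod_cast this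
      · have := heq.2; rw [hX1] at this; exact_mod_cast this
    · rw [show n = (n - (8*m+3)) + (8*m+3) from by omega, Function.iterate_add_apply,
        half m, henon_iter_neg, orbit m (n - (8*m+3)) (by omega)] at heq
      simp only [Prod.neg_mk, Prod.mk.injEq] at heq
      refine orb_ne' m (n - (8*m+3)) (by omega) ⟨?_, ?_⟩
      · have := heq.1; rw [hX0] at this
        have h2 : ((orbX m (n - (8*m+3)) : ℤ) : ℚ) = ((-(3*(m:ℤ)+2) : ℤ) : ℚ) := by
          push_cast at this ⊢; linarith
        exact_mod_cast h2
      · have := heq.2; rw [hX1] at this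
        have h2 : ((orbX m (n - (8*m+3) + 1) : ℤ) : ℚ) = ((3*(m:ℤ) : ℤ) : ℚ) := by
          push_cast at this ⊢; linarith
        exact_mod_cast h2
end

section
/- For every integer d ≥ 1 and every real number x with |x| ≤ (d−1)/2, one has |c_d(x)| ≤ 1/(4d). -/
/-- The real polynomial `c_d`: for `d = 2j`,
`c_{2j}(x) = (1/(2j)!) ∏_{i=1}^{j} (x² − ((2i−1)/2)²)`, and for `d = 2j+1`,
`c_{2j+1}(x) = (1/(2j+1)!) x ∏_{i=1}^{j} (x² − i²)`. -/
noncomputable def c (d : ℕ) (x : ℝ) : ℝ :=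
  if d % 2 = 0 then
    (1 / (d.factorial : ℝ)) * ∏ i ∈ Finset.Icc 1 (d / 2), (x ^ 2 - ((2 * (i : ℝ) - 1) / 2) ^ 2)
  else
    (1 / (d.factorial : ℝ)) * x * ∏ i ∈ Finset.Icc 1 (d / 2), (x ^ 2 - (i : ℝ) ^ 2)

/-- The real polynomial `s_d`: `s_{2k}(x) = Σ_{j=0}^{k} (−1)^{k−j} c_{2j}(x)` and
`s_{2k+1}(x) = Σ_{j=0}^{k} (−1)^{k−j} c_{2j+1}(x)`. -/
noncomputable def s (d : ℕ) (x : ℝ) : ℝ :=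
  ∑ j ∈ Finset.range (d / 2 + 1), (-1 : ℝ) ^ (d / 2 - j) * c (2 * j + d % 2) x

lemma fact_mul_fact (k m : ℕ) :
    (k+1).factorial * (m+1).factorial ≤ (k+m+1).factorial := by
  induction m with
  | zero => simpa using Nat.factorial_le (by omega)
  | succ m ih =>
      have h1 : (k+1).factorial * (m+2).factorial
          = (k+1).factorial * (m+1).factorial * (m+2) := by
        rw [Nat.factorial_succ (m+1)]; ring
      have h2 : (k+m+2).factorial = (k+m+1).factorial * (k+m+2) := by
        rw [Nat.factorial_succ (k+m+1)]; ring
      calc (k+1).factorial * (m+1+1).factorial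
          = (k+1).factorial * (m+1).factorial * (m+2) := h1
        _ ≤ (k+m+1).factorial * (m+2) := Nat.mul_le_mul_right _ ih
        _ ≤ (k+m+1).factorial * (k+m+2) := Nat.mul_le_mul_left _ (by omega)
        _ = (k+m+1+1).factorial := h2.symm

lemma prod_add_two (n : ℕ) :
    ∏ i ∈ Finset.range n, ((i:ℝ) + 2) = ((n+1).factorial : ℝ) := by
  induction n with
  | zero => simp
  | succ n ih =>
      rw [Finset.prod_range_succ, ih, Nat.factorial_succ (n+1)]
      push_cast; ring

lemma prod_reflect (k : ℕ) :
    ∏ i ∈ Finset.range k, ((k:ℝ) + 1 - (i:ℝ)) = ((k+1).factorial : ℝ) := by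
  rw [← prod_add_two k, ← Finset.prod_range_reflect (fun j => ((j:ℝ) + 2)) k]
  refine Finset.prod_congr rfl fun i hi => ?_
  have hik : i < k := Finset.mem_range.mp hi
  have : ((k - 1 - i : ℕ) : ℝ) = (k:ℝ) - 1 - (i:ℝ) := by
    have h1 : i ≤ k - 1 := by omega
    push_cast [Nat.cast_sub h1, Nat.cast_sub (by omega : 1 ≤ k)]
    ring
  rw [this]; ring


lemma Q_step (d : ℕ) (x : ℝ) :
    ∏ i ∈ Finset.range (d+2), (x + (((d+2:ℕ):ℝ) - 1)/2 - (i:ℝ))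
      = (x + ((d:ℝ)+1)/2) * (x - ((d:ℝ)+1)/2)
        * ∏ i ∈ Finset.range d, (x + (((d:ℕ):ℝ) - 1)/2 - (i:ℝ)) := by
  rw [Finset.prod_range_succ' (fun i => (x + (((d+2:ℕ):ℝ) - 1)/2 - (i:ℝ))) (d+1),
    Finset.prod_range_succ]
  have hc : ∀ i ∈ Finset.range d,
      (x + (((d+2:ℕ):ℝ) - 1)/2 - ((i+1:ℕ):ℝ)) = x + (((d:ℕ):ℝ) - 1)/2 - (i:ℝ) := by
    intro i _; push_cast; ring
  rw [Finset.prod_congr rfl hc]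
  push_cast; ring

lemma fact_c_eq (d : ℕ) (x : ℝ) :
    (d.factorial : ℝ) * c d x = ∏ i ∈ Finset.range d, (x + ((d:ℝ) - 1)/2 - (i:ℝ)) := by
  induction d using Nat.twoStepInduction with
  | zero => simp [c]
  | one => norm_num [c]
  | more d ih _ =>
      have hfac : ((d+2).factorial : ℝ) = ((d:ℝ)+2) * ((d:ℝ)+1) * (d.factorial : ℝ) := by
        rw [Nat.factorial_succ (d+1), Nat.factorial_succ d]; push_cast; ring
      have hfd : (d.factorial : ℝ) ≠ 0 := by positivity
      rcases Nat.even_or_odd d with ⟨j, hj⟩ | ⟨j, hj⟩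
      · subst hj
        have hmod : (j + j) % 2 = 0 := by omega
        have hmod2 : (j + j + 2) % 2 = 0 := by omega
        have hdiv : (j + j) / 2 = j := by omega
        have hdiv2 : (j + j + 2) / 2 = j + 1 := by omega
        simp only [c, hmod, hmod2, hdiv, hdiv2, reduceIte] at ih hfd ⊢
        rw [Finset.prod_Icc_succ_top (by omega), Q_step (j+j) x]
        have hP : (∏ i ∈ Finset.Icc 1 j, (x ^ 2 - ((2 * (i:ℝ) - 1) / 2) ^ 2))
            = ∏ i ∈ Finset.range (j+j), (x + (((j+j:ℕ):ℝ) - 1)/2 - (i:ℝ)) := by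
          rw [← ih]; field_simp; try ring
        rw [← hP, hfac]
        field_simp
        push_cast
        ring
      · subst hj
        have hmod2 : ¬((2*j + 1 + 2) % 2 = 0) := by omega
        have hmod : ¬((2*j + 1) % 2 = 0) := by omega
        have hdiv : (2*j + 1) / 2 = j := by omega
        have hdiv2 : (2*j + 1 + 2) / 2 = j + 1 := by omega
        simp only [c, hdiv, hdiv2, if_neg hmod, if_neg hmod2] at ih hfd ⊢
        rw [Finset.prod_Icc_succ_top (by omega), Q_step (2*j+1) x]
        have hP : x * (∏ i ∈ Finset.Icc 1 j, (x ^ 2 - (i:ℝ) ^ 2))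
            = ∏ i ∈ Finset.range (2*j+1), (x + (((2*j+1:ℕ):ℝ) - 1)/2 - (i:ℝ)) := by
          rw [← ih]; field_simp; try ring
        rw [← hP, hfac]
        field_simp
        push_cast
        ring

lemma abs_Q_le (d : ℕ) (hd : 1 ≤ d) (y : ℝ) (h0 : 0 ≤ y) (h1 : y ≤ (d:ℝ) - 1) :
    |∏ i ∈ Finset.range d, (y - (i:ℝ))| ≤ ((d-1).factorial : ℝ) / 4 := by
  by_cases hy : y = (d:ℝ) - 1
  · have hz : ∏ i ∈ Finset.range d, (y - (i:ℝ)) = 0 := by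
      refine Finset.prod_eq_zero (Finset.mem_range.mpr (by omega : d - 1 < d)) ?_
      rw [hy, Nat.cast_sub hd]
      push_cast; ring
    rw [hz, abs_zero]
    positivity
  · have hlt : y < (d:ℝ) - 1 := lt_of_le_of_ne h1 hy
    set k : ℕ := ⌊y⌋.toNat with hk
    have hfl : (0:ℤ) ≤ ⌊y⌋ := Int.floor_nonneg.2 h0
    have hcast : ((k:ℕ):ℝ) = ((⌊y⌋:ℤ):ℝ) := by
      rw [hk]
      have := Int.toNat_of_nonneg hfl
      exact_mod_cast congrArg (fun z : ℤ => (z : ℝ)) this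
    have hk1 : (k:ℝ) ≤ y := by rw [hcast]; exact Int.floor_le y
    have hk2 : y < (k:ℝ) + 1 := by rw [hcast]; exact Int.lt_floor_add_one y
    have hkd : k + 2 ≤ d := by
      have : (k:ℝ) < (d:ℝ) - 1 := lt_of_le_of_lt hk1 hlt
      have h2 : (k:ℝ) + 1 < (d:ℝ) := by linarith
      have : k + 1 < d := by exact_mod_cast h2
      omega
    obtain ⟨m, hm⟩ : ∃ m, d = k + 2 + m := ⟨d - (k+2), by omega⟩
    subst hm
    rw [Finset.abs_prod, Finset.prod_range_add, Finset.prod_range_succ,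
      Finset.prod_range_succ]
    have hA : ∏ i ∈ Finset.range k, |y - (i:ℝ)| ≤ ((k+1).factorial : ℝ) := by
      rw [← prod_reflect k]
      refine Finset.prod_le_prod (fun i _ => abs_nonneg _) (fun i hi => ?_)
      have hik : i < k := Finset.mem_range.mp hi
      have hi' : (i:ℝ) ≤ (k:ℝ) := by exact_mod_cast hik.le
      rw [abs_of_nonneg (by linarith)]
      linarith
    have hB : |y - (k:ℝ)| * |y - ((k+1:ℕ):ℝ)| ≤ 1/4 := by
      rw [abs_of_nonneg (by linarith), abs_of_nonpos (by push_cast; linarith)]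
      push_cast
      nlinarith [sq_nonneg (2*y - 2*(k:ℝ) - 1)]
    have hC : ∏ i ∈ Finset.range m, |y - ((k+2+i:ℕ):ℝ)| ≤ ((m+1).factorial : ℝ) := by
      rw [← prod_add_two m]
      refine Finset.prod_le_prod (fun i _ => abs_nonneg _) (fun i _ => ?_)
      rw [abs_of_nonpos (by push_cast; linarith)]
      push_cast
      linarith
    have hfact : ((k+1).factorial : ℝ) * ((m+1).factorial : ℝ) ≤ ((k+m+1).factorial : ℝ) := by
      exact_mod_cast fact_mul_fact k m
    have hAnn : (0:ℝ) ≤ ∏ i ∈ Finset.range k, |y - (i:ℝ)| :=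
      Finset.prod_nonneg fun i _ => abs_nonneg _
    have hCnn : (0:ℝ) ≤ ∏ i ∈ Finset.range m, |y - ((k+2+i:ℕ):ℝ)| :=
      Finset.prod_nonneg fun i _ => abs_nonneg _
    have hd1 : k + 2 + m - 1 = k + m + 1 := by omega
    rw [hd1]
    calc (∏ i ∈ Finset.range k, |y - (i:ℝ)|) * |y - (k:ℝ)| * |y - ((k+1:ℕ):ℝ)|
          * ∏ i ∈ Finset.range m, |y - ((k+2+i:ℕ):ℝ)|
        = (∏ i ∈ Finset.range k, |y - (i:ℝ)|) * (|y - (k:ℝ)| * |y - ((k+1:ℕ):ℝ)|)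
          * ∏ i ∈ Finset.range m, |y - ((k+2+i:ℕ):ℝ)| := by ring
      _ ≤ ((k+1).factorial : ℝ) * (1/4) * ((m+1).factorial : ℝ) := by
          apply mul_le_mul (mul_le_mul hA hB (by positivity) (by positivity)) hC hCnn
          positivity
      _ = ((k+1).factorial : ℝ) * ((m+1).factorial : ℝ) / 4 := by ring
      _ ≤ ((k+m+1).factorial : ℝ) / 4 := by linarith

/-- `|c_d(x)| ≤ 1/(4d)` for `|x| ≤ (d−1)/2`. -/
theorem abs_c_le_one_div_four_d (d : ℕ) (hd : 1 ≤ d) (x : ℝ)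
    (hx : |x| ≤ ((d : ℝ) - 1) / 2) : |c d x| ≤ 1 / (4 * (d : ℝ)) := by
  have hxl := abs_le.mp hx
  have h0 : 0 ≤ x + ((d:ℝ) - 1)/2 := by linarith [hxl.1]
  have h1 : x + ((d:ℝ) - 1)/2 ≤ (d:ℝ) - 1 := by linarith [hxl.2]
  have key := fact_c_eq d x
  have hQ : |∏ i ∈ Finset.range d, (x + ((d:ℝ) - 1)/2 - (i:ℝ))| ≤ ((d-1).factorial : ℝ)/4 := by
    have := abs_Q_le d hd (x + ((d:ℝ) - 1)/2) h0 h1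
    simpa [sub_sub, add_sub_assoc] using this
  have hfd : (0:ℝ) < (d.factorial : ℝ) := by positivity
  have hcd : |c d x| = |∏ i ∈ Finset.range d, (x + ((d:ℝ) - 1)/2 - (i:ℝ))| / (d.factorial : ℝ) := by
    rw [← key, abs_mul, abs_of_pos hfd]
    field_simp
  rw [hcd]
  rw [div_le_iff₀ hfd]
  have hdf : (d.factorial : ℝ) = (d:ℝ) * ((d-1).factorial : ℝ) := by
    obtain ⟨e, rfl⟩ : ∃ e, d = e + 1 := ⟨d-1, by omega⟩
    simp [Nat.factorial_succ]
    try (push_cast; ring)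
  rw [hdf]
  have hdpos : (0:ℝ) < (d:ℝ) := by exact_mod_cast hd
  calc |∏ i ∈ Finset.range d, (x + ((d:ℝ) - 1)/2 - (i:ℝ))| ≤ ((d-1).factorial : ℝ)/4 := hQ
    _ = 1 / (4 * (d:ℝ)) * ((d:ℝ) * ((d-1).factorial : ℝ)) := by field_simp
end

section
/- For every integer d ≥ 2 and every real number x with |x| ≤ (d−3)/2, one has |c_d(x)| ≤ 1/(2d(d−1)). -/
lemma prod_Icc_one' (j : ℕ) (f : ℕ → ℝ) :
    ∏ i ∈ Finset.Icc 1 j, f i = ∏ i ∈ Finset.range j, f (1 + i) := by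
  rw [← Finset.Ico_add_one_right_eq_Icc, Finset.prod_Ico_eq_prod_range]
  simp

lemma prod_range_add_two (n : ℕ) :
    ∏ i ∈ Finset.range n, ((i : ℝ) + 2) = ((n + 1).factorial : ℝ) := by
  induction n with
  | zero => simp
  | succ n ih =>
    rw [Finset.prod_range_succ, ih]
    push_cast [Nat.factorial_succ]
    ring

lemma prod_desc (k : ℕ) :
    ∏ i ∈ Finset.range k, ((k : ℝ) + 1 - (i : ℝ)) = ((k + 1).factorial : ℝ) := by
  rw [← prod_range_add_two k, ← Finset.prod_range_reflect (fun i => (i : ℝ) + 2) k]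
  refine Finset.prod_congr rfl fun i hi => ?_
  have h := Finset.mem_range.mp hi
  rw [Nat.cast_sub (by omega), Nat.cast_sub (by omega)]
  push_cast
  ring

lemma icc_sub_prod (j : ℕ) (z : ℝ) :
    ∏ i ∈ Finset.Icc 1 j, (z - ((j : ℝ) - (i : ℝ))) = ∏ i ∈ Finset.range j, (z - (i : ℝ)) := by
  rw [prod_Icc_one', ← Finset.prod_range_reflect (fun i => z - (i : ℝ)) j]
  refine Finset.prod_congr rfl fun i hi => ?_
  have h := Finset.mem_range.mp hi
  rw [Nat.cast_sub (by omega), Nat.cast_sub (by omega)]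
  push_cast
  ring

lemma icc_prod_even (j : ℕ) (z : ℝ) :
    ∏ i ∈ Finset.Icc 1 j, ((z - ((j : ℝ) + (i : ℝ) - 1)) * (z - ((j : ℝ) - (i : ℝ)))) =
      ∏ i ∈ Finset.range (j + j), (z - (i : ℝ)) := by
  have hA : ∏ i ∈ Finset.Icc 1 j, (z - ((j : ℝ) + (i : ℝ) - 1)) =
      ∏ i ∈ Finset.range j, (z - ((j + i : ℕ) : ℝ)) := by
    rw [prod_Icc_one']
    refine Finset.prod_congr rfl fun i _ => ?_
    push_cast
    ring
  rw [Finset.prod_mul_distrib, hA, icc_sub_prod,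
    Finset.prod_range_add (fun i => z - (i : ℝ)) j j, mul_comm]

lemma icc_prod_odd (j : ℕ) (z : ℝ) :
    (z - (j : ℝ)) * ∏ i ∈ Finset.Icc 1 j, ((z - ((j : ℝ) + (i : ℝ))) * (z - ((j : ℝ) - (i : ℝ)))) =
      ∏ i ∈ Finset.range (2 * j + 1), (z - (i : ℝ)) := by
  have h : 2 * j + 1 = (j + 1) + j := by ring
  have hA : ∏ i ∈ Finset.Icc 1 j, (z - ((j : ℝ) + (i : ℝ))) =
      ∏ i ∈ Finset.range j, (z - ((j + 1 + i : ℕ) : ℝ)) := by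
    rw [prod_Icc_one']
    refine Finset.prod_congr rfl fun i _ => ?_
    push_cast
    ring
  rw [h, Finset.prod_range_add (fun i => z - (i : ℝ)) (j + 1) j, Finset.prod_range_succ,
    Finset.prod_mul_distrib, hA, icc_sub_prod]
  ring

lemma c_eq_prod (d : ℕ) (x : ℝ) :
    c d x = (1 / (d.factorial : ℝ)) * ∏ i ∈ Finset.range d, (x + ((d : ℝ) - 1) / 2 - (i : ℝ)) := by
  rcases Nat.even_or_odd d with ⟨j, hj⟩ | ⟨j, hj⟩
  · subst hj
    have hm : (j + j) % 2 = 0 := by omega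
    have hd2 : (j + j) / 2 = j := by omega
    unfold c
    rw [if_pos hm, hd2]
    congr 1
    set z : ℝ := x + (((j + j : ℕ) : ℝ) - 1) / 2 with hz
    rw [← icc_prod_even j z]
    refine Finset.prod_congr rfl fun i hi => ?_
    have h := Finset.mem_Icc.mp hi
    rw [hz]
    push_cast
    ring
  · subst hj
    have hm : ¬ (2 * j + 1) % 2 = 0 := by omega
    have hd2 : (2 * j + 1) / 2 = j := by omega
    unfold c
    rw [if_neg hm, hd2]
    set z : ℝ := x + (((2 * j + 1 : ℕ) : ℝ) - 1) / 2 with hz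
    rw [← icc_prod_odd j z]
    have h1 : ∏ i ∈ Finset.Icc 1 j, (x ^ 2 - (i : ℝ) ^ 2) =
        ∏ i ∈ Finset.Icc 1 j, ((z - ((j : ℝ) + (i : ℝ))) * (z - ((j : ℝ) - (i : ℝ)))) := by
      refine Finset.prod_congr rfl fun i _ => ?_
      rw [hz]
      push_cast
      ring
    have h2 : x = z - (j : ℝ) := by
      rw [hz]
      push_cast
      ring
    rw [h1]
    rw [h2]
    ring

lemma fact_mul_fact_le (a b : ℕ) (ha : 2 ≤ a) (hb : 2 ≤ b) :
    a.factorial * b.factorial ≤ 2 * (a + b - 2).factorial := by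
  induction a, ha using Nat.le_induction with
  | base =>
    have h : 2 + b - 2 = b := by omega
    rw [h]
    norm_num [Nat.factorial]
  | succ a ha ih =>
    have h1 : a + 1 + b - 2 = (a + b - 2) + 1 := by omega
    rw [h1, Nat.factorial_succ, Nat.factorial_succ]
    calc (a + 1) * a.factorial * b.factorial = (a + 1) * (a.factorial * b.factorial) := by ring
      _ ≤ (a + 1) * (2 * (a + b - 2).factorial) := Nat.mul_le_mul_left _ ih
      _ ≤ (a + b - 2 + 1) * (2 * (a + b - 2).factorial) := Nat.mul_le_mul_right _ (by omega)
      _ = 2 * ((a + b - 2 + 1) * (a + b - 2).factorial) := by ring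

lemma prod_abs_le (d k : ℕ) (y : ℝ) (hk1 : 1 ≤ k) (hk3 : k + 3 ≤ d)
    (h1 : (k : ℝ) ≤ y) (h2 : y ≤ (k : ℝ) + 1) :
    ∏ i ∈ Finset.range d, |y - (i : ℝ)| ≤
      ((k + 1).factorial : ℝ) * ((d - 1 - k).factorial : ℝ) / 4 := by
  obtain ⟨n, hn⟩ : ∃ n, d = (k + 2) + n := ⟨d - (k + 2), by omega⟩
  subst hn
  have hd1k : (k + 2 + n) - 1 - k = n + 1 := by omega
  rw [hd1k]
  rw [Finset.prod_range_add (fun i => |y - (i : ℝ)|) (k + 2) n,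
    Finset.prod_range_succ, Finset.prod_range_succ]
  have hA : ∏ i ∈ Finset.range k, |y - (i : ℝ)| ≤ ((k + 1).factorial : ℝ) := by
    rw [← prod_desc k]
    refine Finset.prod_le_prod (fun i _ => abs_nonneg _) fun i hi => ?_
    have h := Finset.mem_range.mp hi
    have hic : (i : ℝ) + 1 ≤ (k : ℝ) := by exact_mod_cast h
    rw [abs_of_nonneg (by linarith)]
    linarith
  have hB : |y - (k : ℝ)| * |y - ((k + 1 : ℕ) : ℝ)| ≤ 1 / 4 := by
    have hc : ((k + 1 : ℕ) : ℝ) = (k : ℝ) + 1 := by push_cast; ring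
    rw [hc, abs_of_nonneg (by linarith), abs_of_nonpos (by linarith)]
    nlinarith [sq_nonneg (y - (k : ℝ) - 1 / 2)]
  have hC : ∏ i ∈ Finset.range n, |y - ((k + 2 + i : ℕ) : ℝ)| ≤ ((n + 1).factorial : ℝ) := by
    rw [← prod_range_add_two n]
    refine Finset.prod_le_prod (fun i _ => abs_nonneg _) fun i _ => ?_
    have hic : ((k + 2 + i : ℕ) : ℝ) = (k : ℝ) + 2 + (i : ℝ) := by push_cast; ring
    rw [hic, abs_of_nonpos (by linarith)]
    linarith
  have hPk : (0 : ℝ) ≤ ∏ i ∈ Finset.range k, |y - (i : ℝ)| :=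
    Finset.prod_nonneg fun i _ => abs_nonneg _
  have hPn : (0 : ℝ) ≤ ∏ i ∈ Finset.range n, |y - ((k + 2 + i : ℕ) : ℝ)| :=
    Finset.prod_nonneg fun i _ => abs_nonneg _
  have hfk : (0 : ℝ) ≤ ((k + 1).factorial : ℝ) := by positivity
  calc (∏ i ∈ Finset.range k, |y - (i : ℝ)|) * |y - (k : ℝ)| * |y - ((k + 1 : ℕ) : ℝ)| *
        ∏ i ∈ Finset.range n, |y - ((k + 2 + i : ℕ) : ℝ)|
      = ((∏ i ∈ Finset.range k, |y - (i : ℝ)|) * (|y - (k : ℝ)| * |y - ((k + 1 : ℕ) : ℝ)|)) *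
        ∏ i ∈ Finset.range n, |y - ((k + 2 + i : ℕ) : ℝ)| := by ring
    _ ≤ (((k + 1).factorial : ℝ) * (1 / 4)) * ((n + 1).factorial : ℝ) := by
        refine mul_le_mul ?_ hC hPn (by positivity)
        exact mul_le_mul hA hB (mul_nonneg (abs_nonneg _) (abs_nonneg _)) hfk
    _ = ((k + 1).factorial : ℝ) * ((n + 1).factorial : ℝ) / 4 := by ring

/-- `|c_d(x)| ≤ 1/(2d(d−1))` for `|x| ≤ (d−3)/2`. -/
theorem abs_c_le_one_div_two_d_d_sub_one (d : ℕ) (hd : 2 ≤ d) (x : ℝ)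
    (hx : |x| ≤ ((d : ℝ) - 3) / 2) : |c d x| ≤ 1 / (2 * (d : ℝ) * ((d : ℝ) - 1)) := by
  rcases lt_or_ge d 4 with h4 | h4
  · interval_cases d
    · exfalso
      have h0 := abs_nonneg x
      norm_num at hx
      linarith
    · have hx0 : x = 0 := by
        norm_num at hx
        exact hx
      subst hx0
      norm_num [c]
  · -- d ≥ 4
    have hd4 : (4 : ℝ) ≤ (d : ℝ) := by exact_mod_cast h4
    obtain ⟨hxl, hxr⟩ := abs_le.mp hx
    set y : ℝ := x + ((d : ℝ) - 1) / 2 with hy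
    have hy1 : (1 : ℝ) ≤ y := by rw [hy]; linarith
    have hy2 : y ≤ (d : ℝ) - 2 := by rw [hy]; linarith
    have hfl0 : (1 : ℤ) ≤ ⌊y⌋ := by
      rw [Int.le_floor]
      exact_mod_cast hy1
    set k : ℕ := min (⌊y⌋.toNat) (d - 3) with hk
    have hk1 : 1 ≤ k := by
      refine le_min ?_ (by omega)
      omega
    have hk3 : k + 3 ≤ d := by
      have := min_le_right (⌊y⌋.toNat) (d - 3)
      omega
    have hky1 : (k : ℝ) ≤ y := by
      have h1 : (k : ℤ) ≤ ⌊y⌋ := by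
        have := min_le_left (⌊y⌋.toNat) (d - 3)
        omega
      calc (k : ℝ) ≤ ((⌊y⌋ : ℤ) : ℝ) := by exact_mod_cast h1
        _ ≤ y := Int.floor_le y
    have hky2 : y ≤ (k : ℝ) + 1 := by
      rcases le_or_gt (⌊y⌋.toNat) (d - 3) with hc | hc
      · have hkk : k = ⌊y⌋.toNat := min_eq_left hc
        have hlt := Int.lt_floor_add_one y
        have hcst : ((⌊y⌋.toNat : ℕ) : ℝ) = ((⌊y⌋ : ℤ) : ℝ) := by
          exact_mod_cast congrArg (fun t : ℤ => (t : ℝ)) (Int.toNat_of_nonneg (by omega))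
        rw [hkk, hcst]
        linarith
      · have hkk : k = d - 3 := min_eq_right (le_of_lt hc)
        have hcst : ((d - 3 : ℕ) : ℝ) = (d : ℝ) - 3 := by
          rw [Nat.cast_sub (by omega)]
          norm_num
        rw [hkk, hcst]
        linarith
    have key := prod_abs_le d k y hk1 hk3 hky1 hky2
    rw [c_eq_prod, abs_mul, Finset.abs_prod, ← hy,
      abs_of_pos (by positivity : (0 : ℝ) < 1 / (d.factorial : ℝ))]
    have hfb : ((k + 1).factorial : ℝ) * ((d - 1 - k).factorial : ℝ) ≤
        2 * ((d - 2).factorial : ℝ) := by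
      have h := fact_mul_fact_le (k + 1) (d - 1 - k) (by omega) (by omega)
      have he : (k + 1) + (d - 1 - k) - 2 = d - 2 := by omega
      rw [he] at h
      exact_mod_cast h
    obtain ⟨m, hm⟩ : ∃ m, d = m + 2 := ⟨d - 2, by omega⟩
    have hdf : (d.factorial : ℝ) = (d : ℝ) * ((d : ℝ) - 1) * ((d - 2).factorial : ℝ) := by
      subst hm
      have : (m + 2) - 2 = m := by omega
      rw [this]
      push_cast [Nat.factorial_succ]
      ring
    have hfpos : (0 : ℝ) < ((d - 2).factorial : ℝ) := by positivity
    have hdpos : (0 : ℝ) < (d : ℝ) := by linarith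
    have hd1pos : (0 : ℝ) < (d : ℝ) - 1 := by linarith
    calc (1 / (d.factorial : ℝ)) * ∏ i ∈ Finset.range d, |y - (i : ℝ)|
        ≤ (1 / (d.factorial : ℝ)) *
          (((k + 1).factorial : ℝ) * ((d - 1 - k).factorial : ℝ) / 4) := by
          exact mul_le_mul_of_nonneg_left key (by positivity)
      _ ≤ (1 / (d.factorial : ℝ)) * (2 * ((d - 2).factorial : ℝ) / 4) := by
          refine mul_le_mul_of_nonneg_left ?_ (by positivity)
          linarith
      _ = 1 / (2 * (d : ℝ) * ((d : ℝ) - 1)) := by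
          rw [hdf]
          field_simp
          ring
end

section
/- For every integer d ≥ 2 and every real number x with |x| ≤ (d−1)/2, the derivative of c_d satisfies |c_d′(x)| < (log d + 3)/(2d). -/
open Finset

lemma fact_prod (n : ℕ) : ∏ k ∈ Finset.range n, ((k : ℝ) + 2) = (n + 1).factorial := by
  induction n with
  | zero => simp
  | succ n ih =>
    rw [Finset.prod_range_succ, ih]
    have : (n + 1 + 1).factorial = (n + 2) * (n + 1).factorial := by
      rw [Nat.factorial_succ]
    rw [this]
    push_cast
    ring


lemma harm (n : ℕ) : ∑ j ∈ Finset.range n, (1:ℝ)/((j:ℝ)+2) ≤ Real.log ((n:ℝ)+1) := by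
  induction n with
  | zero => simp
  | succ n ih =>
    rw [Finset.sum_range_succ]
    have hpos : (0:ℝ) < ((n:ℝ)+1)/((n:ℝ)+2) := by positivity
    have h2 := Real.log_le_sub_one_of_pos hpos
    rw [Real.log_div (by positivity) (by positivity)] at h2
    have h3 : ((n:ℝ)+1)/((n:ℝ)+2) - 1 = -(1/((n:ℝ)+2)) := by
      field_simp
      norm_num
    rw [h3] at h2
    push_cast
    have e : ((n:ℝ)+1+1) = (n:ℝ)+2 := by ring
    rw [e]
    linarith


lemma choose_two_le {d k : ℕ} (h2 : 2 ≤ k) (hk : k + 2 ≤ d) : d.choose 2 ≤ d.choose k := by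
  have key : ∀ r, 2 ≤ r → r ≤ d / 2 → d.choose 2 ≤ d.choose r := by
    intro r h2r hr
    induction r with
    | zero => omega
    | succ n ih =>
      rcases Nat.lt_or_ge 2 (n+1) with h | h
      · exact le_trans (ih (by omega) (by omega)) (Nat.choose_le_succ_of_lt_half_left (by omega))
      · have : n + 1 = 2 := by omega
        rw [this]
  rcases Nat.lt_or_ge (d/2) k with h | h
  · rw [← Nat.choose_symm (show k ≤ d by omega)]
    exact key _ (by omega) (by omega)
  · exact key k h2 h

lemma c_eq (d : ℕ) (x : ℝ) :
    c d x = (1 / (d.factorial : ℝ)) * ∏ k ∈ Finset.range d, (x + ((d:ℝ) - 1) / 2 - (k:ℝ)) := by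
  rcases Nat.even_or_odd d with ⟨j, hj⟩ | ⟨j, hj⟩
  · subst hj
    unfold c
    rw [if_pos (by omega)]
    congr 1
    have hd2 : (j + j) / 2 = j := by omega
    rw [hd2, show ((j + j : ℕ):ℝ) = (j:ℝ) + (j:ℝ) by push_cast; ring]
    have lhs : ∏ i ∈ Finset.Icc 1 j, (x ^ 2 - ((2 * (i : ℝ) - 1) / 2) ^ 2)
        = (∏ i ∈ Finset.Icc 1 j, (x - (2 * (i:ℝ) - 1) / 2)) *
          ∏ i ∈ Finset.Icc 1 j, (x + (2 * (i:ℝ) - 1) / 2) := by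
      rw [← Finset.prod_mul_distrib]
      exact Finset.prod_congr rfl (fun i _ => by ring)
    rw [lhs]
    rw [Finset.prod_range_add (fun k => (x + ((j:ℝ) + (j:ℝ) - 1) / 2 - (k:ℝ))) j j]
    have h1 : ∏ k ∈ Finset.range j, (x + ((j:ℝ) + (j:ℝ) - 1) / 2 - ((j + k : ℕ):ℝ))
        = ∏ i ∈ Finset.Icc 1 j, (x - (2 * (i:ℝ) - 1) / 2) := by
      rw [← Finset.Ico_add_one_right_eq_Icc, Finset.prod_Ico_eq_prod_range]
      refine Finset.prod_congr (by norm_num) (fun k hk => ?_)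
      push_cast
      ring
    have h2 : ∏ k ∈ Finset.range j, (x + ((j:ℝ) + (j:ℝ) - 1) / 2 - ((k : ℕ):ℝ))
        = ∏ i ∈ Finset.Icc 1 j, (x + (2 * (i:ℝ) - 1) / 2) := by
      rw [← Finset.prod_range_reflect]
      rw [← Finset.Ico_add_one_right_eq_Icc, Finset.prod_Ico_eq_prod_range]
      refine Finset.prod_congr (by norm_num) (fun k hk => ?_)
      rw [Finset.mem_range] at hk
      rw [Nat.cast_sub (by omega : k ≤ j - 1), Nat.cast_sub (by omega : 1 ≤ j), Nat.cast_one]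
      push_cast
      ring
    rw [h1, h2]
    ring
  · subst hj
    unfold c
    rw [if_neg (by omega)]
    have hd2 : (2 * j + 1) / 2 = j := by omega
    rw [hd2, mul_assoc]
    congr 1
    rw [show ((2 * j + 1 : ℕ):ℝ) = 2 * (j:ℝ) + 1 by push_cast; ring]
    have lhs : ∏ i ∈ Finset.Icc 1 j, (x ^ 2 - (i:ℝ) ^ 2)
        = (∏ i ∈ Finset.Icc 1 j, (x - (i:ℝ))) * ∏ i ∈ Finset.Icc 1 j, (x + (i:ℝ)) := by
      rw [← Finset.prod_mul_distrib]
      exact Finset.prod_congr rfl (fun i _ => by ring)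
    rw [lhs]
    rw [show 2 * j + 1 = j + (j + 1) by ring]
    rw [Finset.prod_range_add (fun k => (x + (2 * (j:ℝ) + 1 - 1) / 2 - (k:ℝ))) j (j + 1)]
    have h1 : ∏ k ∈ Finset.range (j + 1), (x + (2 * (j:ℝ) + 1 - 1) / 2 - ((j + k : ℕ):ℝ))
        = (∏ i ∈ Finset.Icc 1 j, (x - (i:ℝ))) * x := by
      rw [Finset.prod_range_succ']
      congr 1
      · rw [← Finset.Ico_add_one_right_eq_Icc, Finset.prod_Ico_eq_prod_range]
        refine Finset.prod_congr (by norm_num) (fun k hk => ?_)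
        push_cast
        ring
      · push_cast
        ring
    have h2 : ∏ k ∈ Finset.range j, (x + (2 * (j:ℝ) + 1 - 1) / 2 - ((k : ℕ):ℝ))
        = ∏ i ∈ Finset.Icc 1 j, (x + (i:ℝ)) := by
      rw [← Finset.prod_range_reflect]
      rw [← Finset.Ico_add_one_right_eq_Icc, Finset.prod_Ico_eq_prod_range]
      refine Finset.prod_congr (by norm_num) (fun k hk => ?_)
      rw [Finset.mem_range] at hk
      rw [Nat.cast_sub (by omega : k ≤ j - 1), Nat.cast_sub (by omega : 1 ≤ j), Nat.cast_one]
      push_cast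
      ring
    rw [h1, h2]
    ring

lemma deriv_c (d : ℕ) (x : ℝ) :
    deriv (c d) x = (1 / (d.factorial : ℝ)) *
      ∑ j ∈ Finset.range d, ∏ k ∈ (Finset.range d).erase j, (x + ((d:ℝ) - 1) / 2 - (k:ℝ)) := by
  have hfun : c d = fun y => (1 / (d.factorial:ℝ)) *
      ∏ k ∈ Finset.range d, (y + ((d:ℝ)-1)/2 - (k:ℝ)) := funext (fun y => c_eq d y)
  rw [hfun]
  have H : HasDerivAt (fun y : ℝ => ∏ k ∈ Finset.range d, (y + ((d:ℝ)-1)/2 - (k:ℝ)))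
      (∑ j ∈ Finset.range d, (∏ k ∈ (Finset.range d).erase j, (x + ((d:ℝ)-1)/2 - (k:ℝ))) • (1:ℝ)) x := by
    apply HasDerivAt.fun_finsetProd
    intro i _
    simpa using ((hasDerivAt_id x).add_const (((d:ℝ)-1)/2)).sub_const (i:ℝ)
  have H2 := H.const_mul (1 / (d.factorial:ℝ))
  rw [H2.deriv]
  simp [smul_eq_mul]

lemma sum_Q_bound (d m : ℕ) (y : ℝ) (hm : m + 2 ≤ d)
    (hmy : (m:ℝ) ≤ y) (hym : y ≤ (m:ℝ) + 1) :
    ∑ j ∈ Finset.range d, ∏ k ∈ (Finset.range d).erase j, |y - (k:ℝ)| ≤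
      ((m+1).factorial : ℝ) * ((d - 1 - m).factorial : ℝ) *
        ((if m = 0 then 1 else 1/2) + (if m + 2 = d then 1 else 1/2) +
          (1/4) * (Real.log ((m:ℝ) + 1) + Real.log (((d - 1 - m : ℕ)):ℝ))) := by
  set f : ℕ → ℝ := fun k => |y - (k:ℝ)| with hf
  set A := (((m+1).factorial : ℕ) : ℝ) with hA
  set B := (((d-1-m).factorial : ℕ) : ℝ) with hB
  have hA1 : (1:ℝ) ≤ A := by rw [hA]; exact_mod_cast Nat.one_le_iff_ne_zero.mpr (Nat.factorial_pos _).ne'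
  have hB1 : (1:ℝ) ≤ B := by rw [hB]; exact_mod_cast Nat.one_le_iff_ne_zero.mpr (Nat.factorial_pos _).ne'
  have habs : ∀ s : Finset ℕ, (0:ℝ) ≤ ∏ k ∈ s, f k :=
    fun s => Finset.prod_nonneg fun k _ => abs_nonneg _
  have hflow : ∀ k : ℕ, (k:ℝ) ≤ m → f k = y - k :=
    fun k hk => abs_of_nonneg (by linarith)
  have hfhigh : ∀ k : ℕ, (m:ℝ) + 1 ≤ k → f k = (k:ℝ) - y := by
    intro k hk
    rw [hf]
    dsimp only
    rw [abs_sub_comm]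
    exact abs_of_nonneg (by linarith)
  -- identities
  have I1 : ∏ k ∈ Finset.range m, ((m:ℝ)+1-(k:ℝ)) = A := by
    rw [← Finset.prod_range_reflect, hA, ← fact_prod m]
    refine Finset.prod_congr rfl fun k hk => ?_
    rw [Finset.mem_range] at hk
    rw [Nat.cast_sub (by omega : k ≤ m - 1), Nat.cast_sub (by omega : 1 ≤ m), Nat.cast_one]
    ring
  have I1e : ∀ j, j < m → ∏ k ∈ (Finset.range m).erase j, ((m:ℝ)+1-(k:ℝ)) = A / ((m:ℝ)+1-(j:ℝ)) := by
    intro j hj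
    have hpos : (0:ℝ) < (m:ℝ)+1-(j:ℝ) := by
      have : (j:ℝ) < m := by exact_mod_cast hj
      linarith
    have h := Finset.prod_erase_mul (Finset.range m) (fun k => (m:ℝ)+1-(k:ℝ)) (Finset.mem_range.mpr hj)
    rw [I1] at h
    rw [eq_div_iff hpos.ne']
    exact h
  have I2 : ∏ k ∈ Finset.Ico (m+2) d, ((k:ℝ)-(m:ℝ)) = B := by
    rw [Finset.prod_Ico_eq_prod_range]
    rw [Finset.prod_congr rfl (fun k (_ : k ∈ Finset.range (d - (m+2))) =>
      (by push_cast; ring : ((m+2+k:ℕ):ℝ) - m = (k:ℝ)+2)), fact_prod]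
    rw [hB]
    norm_cast
    congr 1
    omega
  have I2e : ∀ j, j ∈ Finset.Ico (m+2) d → ∏ k ∈ (Finset.Ico (m+2) d).erase j, ((k:ℝ)-(m:ℝ)) = B / ((j:ℝ)-(m:ℝ)) := by
    intro j hj
    rw [Finset.mem_Ico] at hj
    have hpos : (0:ℝ) < (j:ℝ)-(m:ℝ) := by
      have : (m:ℝ) + 2 ≤ j := by
        have : m + 2 ≤ j := hj.1
        exact_mod_cast this
      linarith
    have h := Finset.prod_erase_mul (Finset.Ico (m+2) d) (fun k => (k:ℝ)-(m:ℝ))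
      (Finset.mem_Ico.mpr ⟨hj.1, hj.2⟩)
    rw [I2] at h
    rw [eq_div_iff hpos.ne']
    exact h
  -- subset product bounds
  have Pfront : ∀ s : Finset ℕ, s ⊆ Finset.range m →
      ∏ k ∈ s, f k ≤ ∏ k ∈ s, ((m:ℝ)+1-(k:ℝ)) := by
    intro s hs
    refine Finset.prod_le_prod (fun k _ => abs_nonneg _) (fun k hk => ?_)
    have hk' := Finset.mem_range.mp (hs hk)
    have hkm : (k:ℝ) ≤ m := by exact_mod_cast hk'.le
    rw [hflow k hkm]
    linarith
  have Pback : ∀ s : Finset ℕ, s ⊆ Finset.Ico (m+2) d →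
      ∏ k ∈ s, f k ≤ ∏ k ∈ s, ((k:ℝ)-(m:ℝ)) := by
    intro s hs
    refine Finset.prod_le_prod (fun k _ => abs_nonneg _) (fun k hk => ?_)
    have hk' := (Finset.mem_Ico.mp (hs hk)).1
    have hkm : (m:ℝ) + 2 ≤ k := by exact_mod_cast hk'
    rw [hfhigh k (by linarith)]
    linarith
  have PF : ∏ k ∈ Finset.range m, f k ≤ A := le_of_le_of_eq (Pfront _ (subset_refl _)) I1
  have PB : ∏ k ∈ Finset.Ico (m+2) d, f k ≤ B := le_of_le_of_eq (Pback _ (subset_refl _)) I2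
  -- peeling
  have hpeel : ∀ a : ℕ, a + 1 ≤ d → ∏ k ∈ Finset.Ico a d, f k = f a * ∏ k ∈ Finset.Ico (a+1) d, f k := by
    intro a ha
    rw [← Finset.prod_Ico_consecutive f (Nat.le_succ a) ha, Nat.Ico_succ_singleton,
      Finset.prod_singleton]
  -- simple factor bounds
  have hfm : f m ≤ 1 := by rw [hflow m le_rfl]; linarith
  have hfm1 : f (m+1) ≤ 1 := by
    rw [hfhigh (m+1) (by push_cast; linarith)]
    push_cast
    linarith
  have hpair14 : f m * f (m+1) ≤ 1/4 := by
    rw [hflow m le_rfl, hfhigh (m+1) (by push_cast; linarith)]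
    push_cast
    nlinarith [sq_nonneg (2*y - 2*(m:ℝ) - 1)]
  -- case bounds
  have hQlow : ∀ j ∈ Finset.range m, ∏ k ∈ (Finset.range d).erase j, f k ≤
      A * B * ((1/4) * (1/((m:ℝ)+1-(j:ℝ)))) := by
    intro j hj
    rw [Finset.mem_range] at hj
    have hset : (Finset.range d).erase j = ((Finset.range m).erase j) ∪ Finset.Ico m d := by
      ext a
      simp only [Finset.mem_erase, Finset.mem_union, Finset.mem_range, Finset.mem_Ico]
      omega
    have hdisj : Disjoint ((Finset.range m).erase j) (Finset.Ico m d) := by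
      refine Finset.disjoint_left.mpr fun a ha hb => ?_
      rw [Finset.mem_erase, Finset.mem_range] at ha
      rw [Finset.mem_Ico] at hb
      omega
    rw [hset, Finset.prod_union hdisj, hpeel m (by omega), hpeel (m+1) (by omega)]
    have e2 : Finset.Ico (m+1+1) d = Finset.Ico (m+2) d := rfl
    rw [e2]
    have h1 : ∏ k ∈ (Finset.range m).erase j, f k ≤ A / ((m:ℝ)+1-(j:ℝ)) := by
      rw [← I1e j hj]
      exact Pfront _ ((Finset.erase_subset _ _))
    have hpos : (0:ℝ) < (m:ℝ)+1-(j:ℝ) := by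
      have : (j:ℝ) < m := by exact_mod_cast hj
      linarith
    have h2 : f m * (f (m+1) * ∏ k ∈ Finset.Ico (m+2) d, f k) ≤ (1/4) * B := by
      rw [← mul_assoc]
      exact mul_le_mul hpair14 PB (habs _) (by norm_num)
    have h3 := mul_le_mul h1 h2
      (mul_nonneg (abs_nonneg _) (mul_nonneg (abs_nonneg _) (habs _))) (by positivity)
    refine h3.trans (le_of_eq ?_)
    field_simp
  have hQm : ∏ k ∈ (Finset.range d).erase m, f k ≤ A * B * (if m = 0 then 1 else 1/2) := by
    by_cases hm0 : m = 0
    · rw [if_pos hm0]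
      subst hm0
      have hset : (Finset.range d).erase 0 = Finset.Ico 1 d := by
        ext a
        simp only [Finset.mem_erase, Finset.mem_range, Finset.mem_Ico]
        omega
      rw [hset, hpeel 1 (by omega)]
      have hf1 : f 1 ≤ 1 := by simpa using hfm1
      have hP2 : ∏ k ∈ Finset.Ico (1+1) d, f k ≤ B := by
        have : Finset.Ico (1+1) d = Finset.Ico (0+2) d := rfl
        rw [this]
        exact PB
      have hAval : A = 1 := by rw [hA]; norm_num
      rw [hAval]
      calc f 1 * ∏ k ∈ Finset.Ico (1+1) d, f k ≤ 1 * B :=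
            mul_le_mul hf1 hP2 (habs _) zero_le_one
        _ = 1 * B * 1 := by ring
    · rw [if_neg hm0]
      have hm1 : 1 ≤ m := by omega
      have hcast : ((m-1:ℕ):ℝ) = (m:ℝ) - 1 := by
        rw [Nat.cast_sub hm1, Nat.cast_one]
      have hset : (Finset.range d).erase m = Finset.range m ∪ Finset.Ico (m+1) d := by
        ext a
        simp only [Finset.mem_erase, Finset.mem_union, Finset.mem_range, Finset.mem_Ico]
        omega
      have hdisj : Disjoint (Finset.range m) (Finset.Ico (m+1) d) := by
        refine Finset.disjoint_left.mpr fun a ha hb => ?_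
        rw [Finset.mem_range] at ha
        rw [Finset.mem_Ico] at hb
        omega
      rw [hset, Finset.prod_union hdisj, hpeel (m+1) (by omega),
        (rfl : Finset.Ico (m+1+1) d = Finset.Ico (m+2) d),
        ← Finset.prod_erase_mul (Finset.range m) f (Finset.mem_range.mpr (by omega : m-1 < m))]
      have h1 : ∏ k ∈ (Finset.range m).erase (m-1), f k ≤ A/2 := by
        have hIe := I1e (m-1) (by omega)
        rw [hcast] at hIe
        have he : A / ((m:ℝ)+1-((m:ℝ)-1)) = A/2 := by norm_num
        rw [he] at hIe
        exact le_of_le_of_eq (Pfront _ (Finset.erase_subset _ _)) hIe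
      have hpairA : f (m-1) * f (m+1) ≤ 1 := by
        rw [hflow (m-1) (by rw [hcast]; linarith), hfhigh (m+1) (by push_cast; linarith), hcast]
        push_cast
        nlinarith [sq_nonneg (y - (m:ℝ))]
      have h3 : (f (m-1) * f (m+1)) * ∏ k ∈ Finset.Ico (m+2) d, f k ≤ 1 * B :=
        mul_le_mul hpairA PB (habs _) zero_le_one
      calc (∏ k ∈ (Finset.range m).erase (m-1), f k) * f (m-1) *
            (f (m+1) * ∏ k ∈ Finset.Ico (m+2) d, f k)
          = (∏ k ∈ (Finset.range m).erase (m-1), f k) *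
            ((f (m-1) * f (m+1)) * ∏ k ∈ Finset.Ico (m+2) d, f k) := by ring
        _ ≤ (A/2) * (1 * B) := mul_le_mul h1 h3
            (mul_nonneg (mul_nonneg (abs_nonneg _) (abs_nonneg _)) (habs _)) (by positivity)
        _ = A * B * (1/2) := by ring
  have hQm1 : ∏ k ∈ (Finset.range d).erase (m+1), f k ≤ A * B * (if m+2 = d then 1 else 1/2) := by
    by_cases hd2 : m + 2 = d
    · rw [if_pos hd2]
      have hBval : B = 1 := by
        rw [hB, show d - 1 - m = 1 by omega]
        norm_num
      have hset : (Finset.range d).erase (m+1) = Finset.range (m+1) := by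
        ext a
        simp only [Finset.mem_erase, Finset.mem_range]
        omega
      rw [hset, Finset.prod_range_succ, hBval]
      calc (∏ k ∈ Finset.range m, f k) * f m ≤ A * 1 :=
            mul_le_mul PF hfm (abs_nonneg _) (by positivity)
        _ = A * 1 * 1 := by ring
    · rw [if_neg hd2]
      have hd3 : m + 3 ≤ d := by omega
      have hset : (Finset.range d).erase (m+1) = Finset.range (m+1) ∪ Finset.Ico (m+2) d := by
        ext a
        simp only [Finset.mem_erase, Finset.mem_union, Finset.mem_range, Finset.mem_Ico]
        omega
      have hdisj : Disjoint (Finset.range (m+1)) (Finset.Ico (m+2) d) := by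
        refine Finset.disjoint_left.mpr fun a ha hb => ?_
        rw [Finset.mem_range] at ha
        rw [Finset.mem_Ico] at hb
        omega
      have hmem : m + 2 ∈ Finset.Ico (m+2) d := Finset.mem_Ico.mpr ⟨le_rfl, by omega⟩
      rw [hset, Finset.prod_union hdisj, Finset.prod_range_succ,
        ← Finset.prod_erase_mul (Finset.Ico (m+2) d) f hmem]
      have h1 : ∏ k ∈ (Finset.Ico (m+2) d).erase (m+2), f k ≤ B/2 := by
        have hIe := I2e (m+2) hmem
        have he : ((m+2:ℕ):ℝ) - (m:ℝ) = 2 := by push_cast; ring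
        rw [he] at hIe
        exact le_of_le_of_eq (Pback _ (Finset.erase_subset _ _)) hIe
      have hpairB : f m * f (m+2) ≤ 1 := by
        rw [hflow m le_rfl, hfhigh (m+2) (by push_cast; linarith)]
        push_cast
        nlinarith [sq_nonneg (y - (m:ℝ) - 1)]
      calc (∏ k ∈ Finset.range m, f k) * f m *
            ((∏ k ∈ (Finset.Ico (m+2) d).erase (m+2), f k) * f (m+2))
          = (∏ k ∈ Finset.range m, f k) *
            ((f m * f (m+2)) * ∏ k ∈ (Finset.Ico (m+2) d).erase (m+2), f k) := by ring
        _ ≤ A * (1 * (B/2)) := mul_le_mul PF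
            (mul_le_mul hpairB (le_of_eq rfl) (habs _) zero_le_one |>.trans
              (by nlinarith [habs ((Finset.Ico (m+2) d).erase (m+2)), h1]))
            (mul_nonneg (mul_nonneg (abs_nonneg _) (abs_nonneg _)) (habs _)) (by positivity)
        _ = A * B * (1/2) := by ring
  have hQhigh : ∀ j ∈ Finset.Ico (m+2) d, ∏ k ∈ (Finset.range d).erase j, f k ≤
      A * B * ((1/4) * (1/((j:ℝ)-(m:ℝ)))) := by
    intro j hj
    have hj' := Finset.mem_Ico.mp hj
    have hjm : (m:ℝ) + 2 ≤ (j:ℝ) := by exact_mod_cast hj'.1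
    have hset : (Finset.range d).erase j = Finset.range (m+2) ∪ (Finset.Ico (m+2) d).erase j := by
      ext a
      simp only [Finset.mem_erase, Finset.mem_union, Finset.mem_range, Finset.mem_Ico]
      omega
    have hdisj : Disjoint (Finset.range (m+2)) ((Finset.Ico (m+2) d).erase j) := by
      refine Finset.disjoint_left.mpr fun a ha hb => ?_
      rw [Finset.mem_range] at ha
      rw [Finset.mem_erase, Finset.mem_Ico] at hb
      omega
    rw [hset, Finset.prod_union hdisj, (rfl : Finset.range (m+2) = Finset.range (m+1+1)),
      Finset.prod_range_succ, Finset.prod_range_succ]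
    have h1 : ∏ k ∈ (Finset.Ico (m+2) d).erase j, f k ≤ B/((j:ℝ)-(m:ℝ)) :=
      le_of_le_of_eq (Pback _ (Finset.erase_subset _ _)) (I2e j hj)
    have hpos : (0:ℝ) < (j:ℝ)-(m:ℝ) := by linarith
    calc (∏ k ∈ Finset.range m, f k) * f m * f (m+1) * ∏ k ∈ (Finset.Ico (m+2) d).erase j, f k
        = (∏ k ∈ Finset.range m, f k) * ((f m * f (m+1)) * ∏ k ∈ (Finset.Ico (m+2) d).erase j, f k) := by
          ring
      _ ≤ A * ((1/4) * (B/((j:ℝ)-(m:ℝ)))) := mul_le_mul PF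
          (mul_le_mul hpair14 h1 (habs _) (by norm_num))
          (mul_nonneg (mul_nonneg (abs_nonneg _) (abs_nonneg _)) (habs _)) (by positivity)
      _ = A * B * ((1/4) * (1/((j:ℝ)-(m:ℝ)))) := by field_simp
  -- assemble the sum
  have hsplit : ∑ j ∈ Finset.range d, ∏ k ∈ (Finset.range d).erase j, f k =
      (∑ j ∈ Finset.range m, ∏ k ∈ (Finset.range d).erase j, f k) +
      (∏ k ∈ (Finset.range d).erase m, f k) +
      (∏ k ∈ (Finset.range d).erase (m+1), f k) +
      ∑ j ∈ Finset.Ico (m+2) d, ∏ k ∈ (Finset.range d).erase j, f k := by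
    rw [Finset.range_eq_Ico,
      ← Finset.sum_Ico_consecutive (fun j => ∏ k ∈ (Finset.Ico 0 d).erase j, f k)
        (Nat.zero_le (m+2)) hm]
    congr 1
    rw [show m+2 = m+1+1 from rfl, Finset.sum_Ico_succ_top (Nat.zero_le (m+1)),
      Finset.sum_Ico_succ_top (Nat.zero_le m)]
    rw [Finset.range_eq_Ico]
  -- bound the two sums
  have S1 : ∑ j ∈ Finset.range m, ∏ k ∈ (Finset.range d).erase j, f k ≤
      A * B * (1/4) * Real.log ((m:ℝ)+1) := by
    calc ∑ j ∈ Finset.range m, ∏ k ∈ (Finset.range d).erase j, f k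
        ≤ ∑ j ∈ Finset.range m, A * B * ((1/4) * (1/((m:ℝ)+1-(j:ℝ)))) :=
          Finset.sum_le_sum hQlow
      _ = A * B * (1/4) * ∑ j ∈ Finset.range m, 1/((m:ℝ)+1-(j:ℝ)) := by
          rw [Finset.mul_sum]
          exact Finset.sum_congr rfl fun j _ => by ring
      _ = A * B * (1/4) * ∑ j ∈ Finset.range m, 1/((j:ℝ)+2) := by
          congr 1
          rw [← Finset.sum_range_reflect]
          refine Finset.sum_congr rfl fun k hk => ?_
          rw [Finset.mem_range] at hk
          rw [Nat.cast_sub (by omega : k ≤ m - 1), Nat.cast_sub (by omega : 1 ≤ m), Nat.cast_one]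
          ring_nf
      _ ≤ A * B * (1/4) * Real.log ((m:ℝ)+1) := by
          apply mul_le_mul_of_nonneg_left (harm m) (by positivity)
  have S2 : ∑ j ∈ Finset.Ico (m+2) d, ∏ k ∈ (Finset.range d).erase j, f k ≤
      A * B * (1/4) * Real.log (((d-1-m:ℕ)):ℝ) := by
    calc ∑ j ∈ Finset.Ico (m+2) d, ∏ k ∈ (Finset.range d).erase j, f k
        ≤ ∑ j ∈ Finset.Ico (m+2) d, A * B * ((1/4) * (1/((j:ℝ)-(m:ℝ)))) :=
          Finset.sum_le_sum hQhigh
      _ = A * B * (1/4) * ∑ j ∈ Finset.Ico (m+2) d, 1/((j:ℝ)-(m:ℝ)) := by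
          rw [Finset.mul_sum]
          exact Finset.sum_congr rfl fun j _ => by ring
      _ = A * B * (1/4) * ∑ k ∈ Finset.range (d-(m+2)), 1/((k:ℝ)+2) := by
          congr 1
          rw [Finset.sum_Ico_eq_sum_range]
          refine Finset.sum_congr rfl fun k hk => ?_
          push_cast
          ring_nf
      _ ≤ A * B * (1/4) * Real.log (((d-(m+2) : ℕ) : ℝ) + 1) := by
          apply mul_le_mul_of_nonneg_left (harm _) (by positivity)
      _ = A * B * (1/4) * Real.log (((d-1-m:ℕ)):ℝ) := by
          congr 1
          have : ((d-(m+2) : ℕ) : ℝ) + 1 = (((d-(m+2)) + 1 : ℕ) : ℝ) := by push_cast; ring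
          rw [this, show (d-(m+2)) + 1 = d - 1 - m from by omega]
  calc ∑ j ∈ Finset.range d, ∏ k ∈ (Finset.range d).erase j, f k
      = (∑ j ∈ Finset.range m, ∏ k ∈ (Finset.range d).erase j, f k) +
        (∏ k ∈ (Finset.range d).erase m, f k) +
        (∏ k ∈ (Finset.range d).erase (m+1), f k) +
        ∑ j ∈ Finset.Ico (m+2) d, ∏ k ∈ (Finset.range d).erase j, f k := hsplit
    _ ≤ (A * B * (1/4) * Real.log ((m:ℝ)+1)) + (A * B * (if m = 0 then 1 else 1/2)) +
        (A * B * (if m+2 = d then 1 else 1/2)) + (A * B * (1/4) * Real.log (((d-1-m:ℕ)):ℝ)) := by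
        exact add_le_add (add_le_add (add_le_add S1 hQm) hQm1) S2
    _ = A * B * ((if m = 0 then 1 else 1/2) + (if m + 2 = d then 1 else 1/2) +
          (1/4) * (Real.log ((m:ℝ) + 1) + Real.log (((d - 1 - m : ℕ)):ℝ))) := by ring

set_option maxHeartbeats 1000000 in
/-- `|c_d′(x)| < (log d + 3)/(2d)` for `|x| ≤ (d−1)/2`. -/
theorem abs_deriv_c_lt (d : ℕ) (hd : 2 ≤ d) (x : ℝ)
    (hx : |x| ≤ ((d : ℝ) - 1) / 2) :
    |deriv (c d) x| < (Real.log d + 3) / (2 * (d : ℝ)) := by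
  rcases eq_or_lt_of_le hd with h2 | hd3
  · -- d = 2
    subst h2
    rw [deriv_c]
    have e0 : (Finset.range 2).erase 0 = {1} := by decide
    have e1 : (Finset.range 2).erase 1 = {0} := by decide
    rw [Finset.sum_range_succ, Finset.sum_range_one, e0, e1]
    simp only [Finset.prod_singleton]
    have hlog : (0:ℝ) < Real.log 2 := Real.log_pos (by norm_num)
    have hx2 : |x| ≤ 1/2 := by
      have : ((2:ℕ):ℝ) = 2 := by norm_num
      rw [this] at hx
      linarith [hx]
    have key : |1 / ((Nat.factorial 2 : ℕ):ℝ) *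
        ((x + (((2:ℕ):ℝ) - 1) / 2 - ((1:ℕ):ℝ)) + (x + (((2:ℕ):ℝ) - 1) / 2 - ((0:ℕ):ℝ)))| = |x| := by
      norm_num [Nat.factorial]
      rw [show x + 1 / 2 - 1 + (x + 1 / 2) = x * 2 by ring, abs_mul, abs_two]
      ring
    rw [key]
    have : ((2:ℕ):ℝ) = 2 := by norm_num
    rw [this]
    calc |x| ≤ 1/2 := hx2
      _ < (Real.log 2 + 3) / (2 * 2) := by linarith
  · -- d ≥ 3
    have hd3' : 3 ≤ d := hd3
    rw [deriv_c]
    set y := x + ((d:ℝ) - 1) / 2 with hy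
    rw [abs_le] at hx
    have hy0 : 0 ≤ y := by rw [hy]; linarith [hx.1]
    have hyd : y ≤ (d:ℝ) - 1 := by rw [hy]; linarith [hx.2]
    set m := min (⌊y⌋₊) (d - 2) with hmdef
    have hm : m + 2 ≤ d := by
      have := min_le_right (⌊y⌋₊) (d-2)
      omega
    have hmy : (m:ℝ) ≤ y := by
      calc (m:ℝ) ≤ (⌊y⌋₊ : ℝ) := by exact_mod_cast min_le_left _ _
        _ ≤ y := Nat.floor_le hy0
    have hym : y ≤ (m:ℝ) + 1 := by
      rcases le_or_gt (⌊y⌋₊) (d-2) with h | h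
      · rw [hmdef, min_eq_left h]
        exact (Nat.lt_floor_add_one y).le
      · rw [hmdef, min_eq_right h.le]
        have : ((d-2:ℕ):ℝ) = (d:ℝ) - 2 := by
          rw [Nat.cast_sub (by omega : 2 ≤ d)]
          norm_num
        rw [this]
        linarith
    -- the sum bound
    have hsum := sum_Q_bound d m y hm hmy hym
    set A := (((m+1).factorial : ℕ) : ℝ) with hA
    set B := (((d-1-m).factorial : ℕ) : ℝ) with hB
    set S : ℝ := ((if m = 0 then 1 else 1/2) + (if m + 2 = d then 1 else 1/2) +
          (1/4) * (Real.log ((m:ℝ) + 1) + Real.log (((d - 1 - m : ℕ)):ℝ))) with hS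
    set N := d.choose (m+1) with hN
    have hfact : ((d.factorial : ℕ) : ℝ) = (N:ℝ) * A * B := by
      have h := Nat.choose_mul_factorial_mul_factorial (show m+1 ≤ d by omega)
      have he : d - (m+1) = d - 1 - m := by omega
      rw [he] at h
      rw [← h]
      push_cast
      ring
    have hNpos : 0 < N := Nat.choose_pos (by omega)
    have hA0 : (0:ℝ) < A := by rw [hA]; exact_mod_cast Nat.factorial_pos _
    have hB0 : (0:ℝ) < B := by rw [hB]; exact_mod_cast Nat.factorial_pos _
    have hN0 : (0:ℝ) < (N:ℝ) := by exact_mod_cast hNpos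
    -- |deriv| ≤ S / N
    have step1 : |1 / ((d.factorial : ℕ):ℝ) * ∑ j ∈ Finset.range d,
        ∏ k ∈ (Finset.range d).erase j, (y - (k:ℝ))| ≤ S / (N:ℝ) := by
      rw [abs_mul]
      have h1 : |1 / ((d.factorial : ℕ):ℝ)| = 1 / ((d.factorial : ℕ):ℝ) :=
        abs_of_pos (by positivity)
      rw [h1]
      have h2 : |∑ j ∈ Finset.range d, ∏ k ∈ (Finset.range d).erase j, (y - (k:ℝ))| ≤
          ∑ j ∈ Finset.range d, ∏ k ∈ (Finset.range d).erase j, |y - (k:ℝ)| := by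
        refine (Finset.abs_sum_le_sum_abs _ _).trans (le_of_eq ?_)
        exact Finset.sum_congr rfl fun j _ => Finset.abs_prod _ _
      have h3 : 1 / ((d.factorial : ℕ):ℝ) * (A * B * S) = S / (N:ℝ) := by
        rw [hfact]
        field_simp
      calc 1 / ((d.factorial : ℕ):ℝ) * |∑ j ∈ Finset.range d,
            ∏ k ∈ (Finset.range d).erase j, (y - (k:ℝ))|
          ≤ 1 / ((d.factorial : ℕ):ℝ) * (A * B * S) := by
            apply mul_le_mul_of_nonneg_left (h2.trans hsum) (by positivity)
        _ = S / (N:ℝ) := h3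
    refine lt_of_le_of_lt step1 ?_
    -- final arithmetic
    have hdR : (3:ℝ) ≤ (d:ℝ) := by exact_mod_cast hd3'
    have hlogd : 0 < Real.log d := Real.log_pos (by linarith)
    have hlog1 : Real.log ((m:ℝ) + 1) ≤ Real.log d := by
      apply Real.log_le_log (by positivity)
      have : (m:ℝ) ≤ (d:ℝ) - 2 := by
        have : m ≤ d - 2 := min_le_right _ _
        have h' : (m:ℝ) ≤ ((d-2:ℕ):ℝ) := by exact_mod_cast this
        rw [Nat.cast_sub (by omega : 2 ≤ d)] at h'
        push_cast at h'
        linarith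
      linarith
    have hlog2 : Real.log (((d-1-m:ℕ)):ℝ) ≤ Real.log d := by
      apply Real.log_le_log
      · have : 1 ≤ d - 1 - m := by omega
        exact_mod_cast Nat.lt_of_lt_of_le Nat.zero_lt_one (by exact_mod_cast this)
      · exact_mod_cast Nat.sub_le _ _ |>.trans (Nat.sub_le _ _)
    clear_value N S A B m y
    by_cases hedge : m = 0 ∨ m + 2 = d
    · -- edge: N = d
      have hNd : N = d := by
        rcases hedge with h | h
        · rw [hN, h]
          exact Nat.choose_one_right d
        · rw [hN, show m + 1 = d - 1 by omega, Nat.choose_symm (show 1 ≤ d by omega),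
            Nat.choose_one_right]
      have hSbound : S ≤ 3/2 + (1/4) * Real.log d := by
        rcases hedge with h | h
        · have hw1 : (if m = 0 then (1:ℝ) else 1/2) = 1 := if_pos h
          have hw2 : (if m + 2 = d then (1:ℝ) else 1/2) = 1/2 := if_neg (by omega)
          have hl1 : Real.log ((m:ℝ) + 1) = 0 := by rw [h]; norm_num
          rw [hS, hw1, hw2, hl1]
          linarith [hlog2]
        · have hw1 : (if m = 0 then (1:ℝ) else 1/2) = 1/2 := if_neg (by omega)
          have hw2 : (if m + 2 = d then (1:ℝ) else 1/2) = 1 := if_pos h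
          have hl2 : Real.log (((d-1-m:ℕ)):ℝ) = 0 := by
            rw [show d - 1 - m = 1 by omega]
            norm_num
          rw [hS, hw1, hw2, hl2]
          linarith [hlog1]
      rw [hNd]
      have hdpos : (0:ℝ) < (d:ℝ) := by linarith
      rw [div_lt_div_iff₀ hdpos (by positivity)]
      nlinarith [hSbound, hlogd, hdpos, mul_pos hlogd hdpos,
        mul_le_mul_of_nonneg_right hSbound (show (0:ℝ) ≤ 2 * (d:ℝ) by positivity)]
    · push_neg at hedge
      have hm1 : 1 ≤ m := by omega
      have hm3 : m + 3 ≤ d := by omega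
      have hSbound : S ≤ 1 + (1/2) * Real.log d := by
        rw [hS, if_neg (by omega), if_neg (by omega)]
        linarith [hlog1, hlog2]
      have hS0 : 0 < S := by
        rw [hS, if_neg (by omega), if_neg (by omega)]
        have : 0 ≤ Real.log ((m:ℝ)+1) := Real.log_nonneg (by push_cast; linarith [Nat.cast_nonneg (α := ℝ) m])
        have h2 : 0 ≤ Real.log (((d-1-m:ℕ)):ℝ) := Real.log_nonneg (by
          have : 1 ≤ d - 1 - m := by omega
          exact_mod_cast this)
        linarith
      have hchoose : (d:ℝ) * ((d:ℝ) - 1) / 2 ≤ (N:ℝ) := by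
        have h := choose_two_le (show 2 ≤ m+1 by omega) (show (m+1) + 2 ≤ d by omega)
        have hc : ((d.choose 2 : ℕ):ℝ) ≤ (N:ℝ) := by rw [hN]; exact_mod_cast h
        rw [Nat.cast_choose_two] at hc
        exact hc
      have hC0 : (0:ℝ) < (d:ℝ) * ((d:ℝ) - 1) / 2 := by
        have h1 : (0:ℝ) < (d:ℝ) := by linarith
        have h2 : (0:ℝ) < (d:ℝ) - 1 := by linarith
        exact div_pos (mul_pos h1 h2) two_pos
      have hd4 : (4:ℝ) ≤ (d:ℝ) := by exact_mod_cast (show 4 ≤ d by omega)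
      have hmono : S / (N:ℝ) ≤ S / ((d:ℝ) * ((d:ℝ) - 1) / 2) := by
        rw [div_le_div_iff₀ hN0 hC0]
        exact mul_le_mul_of_nonneg_left hchoose hS0.le
      refine lt_of_le_of_lt hmono ?_
      rw [div_lt_div_iff₀ hC0 (by positivity)]

      nlinarith [hSbound, hlogd, hd4,
        mul_le_mul_of_nonneg_right hSbound (show (0:ℝ) ≤ 2 * (d:ℝ) by positivity),
        mul_pos hlogd (show (0:ℝ) < (d:ℝ) by linarith),
        mul_nonneg (mul_nonneg hlogd.le (show (0:ℝ) ≤ (d:ℝ) by linarith)) (show (0:ℝ) ≤ (d:ℝ) - 4 by linarith),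
        mul_nonneg (show (0:ℝ) ≤ (d:ℝ) by linarith) (show (0:ℝ) ≤ (d:ℝ) - 4 by linarith)]
end

section
/- As d → ∞, the functions (−1)^d s_{2d+1}(x) converge locally uniformly on ℝ to (2/√3)·sin(πx/3), and their derivatives (−1)^d s_{2d+1}′(x) converge locally uniformly on ℝ to (2π/(3√3))·cos(πx/3); that is, on every compact subset of ℝ both convergences are uniform. -/
namespace SOdd

noncomputable def Phi (j : ℕ) (x : ℝ) : ℝ := x * ∏ i ∈ Finset.Icc 1 j, (x ^ 2 - (i : ℝ) ^ 2)

lemma c_odd_eq (j : ℕ) (x : ℝ) : c (2 * j + 1) x = (((2 * j + 1).factorial : ℝ))⁻¹ * Phi j x := by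
  have h1 : ¬ ((2 * j + 1) % 2 = 0) := by omega
  have h2 : (2 * j + 1) / 2 = j := by omega
  simp [c, h1, h2, Phi, one_div, mul_assoc]

lemma Phi_neg (j : ℕ) (x : ℝ) : Phi j (-x) = - Phi j x := by
  simp [Phi, neg_sq]

lemma Phi_succ (j : ℕ) (x : ℝ) : Phi (j + 1) x = (x ^ 2 - ((j : ℝ) + 1) ^ 2) * Phi j x := by
  rw [Phi, Phi, Finset.prod_Icc_succ_top (by omega : 1 ≤ j + 1)]
  push_cast
  ring

lemma Phi_add_one (j : ℕ) (x : ℝ) :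
    Phi (j + 1) (x + 1) = (x + (j : ℝ) + 1) * (x + (j : ℝ) + 2) * Phi j x := by
  induction j generalizing x with
  | zero => simp [Phi_succ, Phi]; ring
  | succ j ih =>
    rw [Phi_succ, ih, Phi_succ]
    push_cast
    ring

lemma Phi_sub_one (j : ℕ) (x : ℝ) :
    Phi (j + 1) (x - 1) = (x - (j : ℝ) - 1) * (x - (j : ℝ) - 2) * Phi j x := by
  have h := Phi_add_one j (-x)
  have h2 : Phi (j + 1) (x - 1) = - Phi (j + 1) (-x + 1) := by
    rw [show x - 1 = -(-x + 1) by ring, Phi_neg]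
  rw [h2, h, Phi_neg]
  ring

lemma Phi_rec (j : ℕ) (x : ℝ) :
    Phi (j + 1) (x + 1) + Phi (j + 1) (x - 1)
      = 2 * Phi (j + 1) x + (2 * (j : ℝ) + 2) * (2 * (j : ℝ) + 3) * Phi j x := by
  rw [Phi_add_one, Phi_sub_one, Phi_succ]
  ring

lemma c_rec (j : ℕ) (x : ℝ) :
    c (2 * (j + 1) + 1) (x + 1) + c (2 * (j + 1) + 1) (x - 1)
      = 2 * c (2 * (j + 1) + 1) x + c (2 * j + 1) x := by
  rw [c_odd_eq, c_odd_eq, c_odd_eq, c_odd_eq]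
  have hfac : ((2 * (j + 1) + 1).factorial : ℝ)
      = (2 * (j : ℝ) + 3) * ((2 * (j : ℝ) + 2) * ((2 * j + 1).factorial : ℝ)) := by
    have : 2 * (j + 1) + 1 = (2 * j + 1) + 1 + 1 := by omega
    rw [this, Nat.factorial_succ, Nat.factorial_succ]
    push_cast
    ring
  have hne : ((2 * j + 1).factorial : ℝ) ≠ 0 := Nat.cast_ne_zero.2 (Nat.factorial_ne_zero _)
  have h := Phi_rec j x
  rw [hfac]
  field_simp
  linear_combination h


noncomputable def g (k : ℕ) (x : ℝ) : ℝ := ∑ j ∈ Finset.range (k + 1), (-1 : ℝ) ^ j * c (2 * j + 1) x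

lemma c_one (x : ℝ) : c 1 x = x := by
  have := c_odd_eq 0 x
  simpa [Phi] using this

lemma g_succ (k : ℕ) (x : ℝ) : g (k + 1) x = g k x + (-1 : ℝ) ^ (k + 1) * c (2 * (k + 1) + 1) x := by
  rw [g, Finset.sum_range_succ]; rfl

lemma g_rec (k : ℕ) (x : ℝ) :
    g k (x + 1) + g k (x - 1) = g k x + (-1 : ℝ) ^ k * c (2 * k + 1) x := by
  induction k with
  | zero =>
    simp only [g, Finset.sum_range_one, pow_zero, one_mul, Nat.mul_zero, Nat.zero_add, c_one]
    ring
  | succ k ih =>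
    rw [g_succ, g_succ, g_succ]
    have hc := c_rec k x
    linear_combination ih + (-1 : ℝ) ^ (k + 1) * hc

lemma c_odd_neg (j : ℕ) (x : ℝ) : c (2 * j + 1) (-x) = - c (2 * j + 1) x := by
  rw [c_odd_eq, c_odd_eq, Phi_neg]; ring

lemma g_neg (k : ℕ) (x : ℝ) : g k (-x) = - g k x := by
  unfold g
  rw [← Finset.sum_neg_distrib]
  exact Finset.sum_congr rfl fun j _ => by rw [c_odd_neg]; ring

lemma Phi_nat_zero (j : ℕ) (m : ℕ) (h1 : m ≤ j) : Phi j (m : ℝ) = 0 := by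
  rcases Nat.eq_zero_or_pos m with rfl | hm
  · simp [Phi]
  · unfold Phi
    rw [Finset.prod_eq_zero (Finset.mem_Icc.2 ⟨hm, h1⟩) (by simp)]
    ring

lemma c_nat_zero (j : ℕ) (m : ℕ) (h1 : m ≤ j) : c (2 * j + 1) (m : ℝ) = 0 := by
  rw [c_odd_eq, Phi_nat_zero j m h1]; ring

noncomputable def fl (x : ℝ) : ℝ := 2 / Real.sqrt 3 * Real.sin (Real.pi * x / 3)

lemma fl_rec (x : ℝ) : fl (x + 1) + fl (x - 1) = fl x := by
  unfold fl
  rw [show Real.pi * (x + 1) / 3 = Real.pi * x / 3 + Real.pi / 3 by ring,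
    show Real.pi * (x - 1) / 3 = Real.pi * x / 3 - Real.pi / 3 by ring,
    Real.sin_add, Real.sin_sub, Real.cos_pi_div_three]
  ring

lemma fl_zero : fl 0 = 0 := by simp [fl]

lemma fl_one : fl 1 = 1 := by
  have h3 : Real.sqrt 3 ≠ 0 := by positivity
  unfold fl
  rw [mul_one, Real.sin_pi_div_three]
  field_simp

lemma fl_neg (x : ℝ) : fl (-x) = - fl x := by
  unfold fl
  rw [show Real.pi * -x / 3 = -(Real.pi * x / 3) by ring, Real.sin_neg]
  ring

lemma g_zero (k : ℕ) : g k 0 = 0 := by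
  unfold g
  refine Finset.sum_eq_zero fun j _ => ?_
  have : c (2 * j + 1) ((0 : ℕ) : ℝ) = 0 := c_nat_zero j 0 (Nat.zero_le _)
  simpa using this

lemma g_one (k : ℕ) : g k 1 = 1 := by
  unfold g
  rw [Finset.sum_eq_single 0]
  · simp [c_one]
  · intro j _ hj
    have hj1 : 1 ≤ j := Nat.one_le_iff_ne_zero.2 hj
    have : c (2 * j + 1) ((1 : ℕ) : ℝ) = 0 := c_nat_zero j 1 hj1
    simp at this
    rw [this]; ring
  · intro h; exact absurd (Finset.mem_range.2 (Nat.succ_pos k)) h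

lemma g_nat (k : ℕ) : ∀ m : ℕ, m ≤ k + 1 → g k (m : ℝ) = fl (m : ℝ) := by
  intro m
  induction m using Nat.strong_induction_on with
  | _ m ih =>
    match m with
    | 0 => intro _; rw [Nat.cast_zero, g_zero, fl_zero]
    | 1 => intro _; rw [Nat.cast_one, g_one, fl_one]
    | (m + 2) =>
      intro hm
      have h1 : g k ((m + 1 : ℕ) : ℝ) = fl ((m + 1 : ℕ) : ℝ) := ih (m + 1) (by omega) (by omega)
      have h0 : g k ((m : ℕ) : ℝ) = fl ((m : ℕ) : ℝ) := ih m (by omega) (by omega)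
      have hrec := g_rec k ((m + 1 : ℕ) : ℝ)
      have hc : c (2 * k + 1) ((m + 1 : ℕ) : ℝ) = 0 := c_nat_zero k (m + 1) (by omega)
      have hfrec := fl_rec ((m + 1 : ℕ) : ℝ)
      have e1 : ((m + 1 : ℕ) : ℝ) + 1 = ((m + 2 : ℕ) : ℝ) := by push_cast; ring
      have e2 : ((m + 1 : ℕ) : ℝ) - 1 = ((m : ℕ) : ℝ) := by push_cast; ring
      rw [e1, e2, hc, mul_zero, add_zero] at hrec
      rw [e1, e2] at hfrec
      have := hrec
      rw [h1, h0] at this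
      linarith [hfrec, this]

lemma g_int (k : ℕ) (n : ℤ) (hn : |n| ≤ (k : ℤ) + 1) : g k (n : ℝ) = fl (n : ℝ) := by
  rcases le_or_gt 0 n with h | h
  · lift n to ℕ using h
    have : n ≤ k + 1 := by exact_mod_cast (abs_of_nonneg (by positivity : (0:ℤ) ≤ (n:ℤ))) ▸ hn
    exact_mod_cast g_nat k n this
  · have h' : 0 ≤ -n := by omega
    lift -n to ℕ using h' with m hm
    have habs : |n| = -n := abs_of_neg h
    have hmk : m ≤ k + 1 := by omega
    have hgm : g k ((m : ℝ)) = fl ((m : ℝ)) := g_nat k m hmk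
    have hnm : n = -(m : ℤ) := by omega
    have hx : (n : ℝ) = -(m : ℝ) := by exact_mod_cast congrArg (Int.cast : ℤ → ℝ) hnm
    rw [hx, g_neg, fl_neg, hgm]


open Polynomial in
lemma contDiff_eval (p : Polynomial ℝ) : ContDiff ℝ (⊤ : ℕ∞) (fun x : ℝ => p.eval x) := by
  induction p using Polynomial.induction_on with
  | C a => simpa using (contDiff_const : ContDiff ℝ (⊤ : ℕ∞) fun _ : ℝ => a)
  | add p q hp hq => simpa [Polynomial.eval_add] using hp.add hq
  | monomial n a ih =>
    have : (fun x : ℝ => (C a * X ^ (n + 1)).eval x) = fun x : ℝ => a * x ^ (n + 1) := by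
      funext x; simp
    rw [this]
    exact contDiff_const.mul (contDiff_id.pow _)

open Polynomial in
lemma iteratedDeriv_eval (p : Polynomial ℝ) (n : ℕ) :
    iteratedDeriv n (fun x : ℝ => p.eval x) = fun x : ℝ => (derivative^[n] p).eval x := by
  induction n with
  | zero => simp
  | succ n ih =>
    rw [iteratedDeriv_succ, ih, Function.iterate_succ_apply']
    funext x
    exact Polynomial.deriv (p := derivative^[n] p)

noncomputable def cP (j : ℕ) : Polynomial ℝ :=
  Polynomial.C (((2 * j + 1).factorial : ℝ))⁻¹ *
    (Polynomial.X * ∏ i ∈ Finset.Icc 1 j, (Polynomial.X ^ 2 - Polynomial.C ((i : ℝ) ^ 2)))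

open Polynomial in
lemma cP_eval (j : ℕ) (x : ℝ) : (cP j).eval x = c (2 * j + 1) x := by
  rw [c_odd_eq, cP]
  simp [Phi, eval_prod]

open Polynomial in
lemma cP_natDegree_le (j : ℕ) : (cP j).natDegree ≤ 2 * j + 1 := by
  have h1 : (Polynomial.X * ∏ i ∈ Finset.Icc 1 j,
      (Polynomial.X ^ 2 - Polynomial.C ((i : ℝ) ^ 2))).natDegree ≤ 1 + 2 * j := by
    refine (natDegree_mul_le).trans ?_
    have : (∏ i ∈ Finset.Icc 1 j, (X ^ 2 - C ((i : ℝ) ^ 2))).natDegree ≤ 2 * j := by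
      refine (natDegree_prod_le _ _).trans ?_
      have : ∀ i ∈ Finset.Icc 1 j, ((X : Polynomial ℝ) ^ 2 - C ((i : ℝ) ^ 2)).natDegree ≤ 2 := by
        intro i _
        refine (natDegree_sub_le _ _).trans ?_
        simp [natDegree_X_pow]
      calc ∑ i ∈ Finset.Icc 1 j, ((X : Polynomial ℝ) ^ 2 - C ((i : ℝ) ^ 2)).natDegree
          ≤ ∑ i ∈ Finset.Icc 1 j, 2 := Finset.sum_le_sum this
        _ = 2 * j := by simp [Nat.card_Icc, mul_comm]
    simp only [natDegree_X]
    omega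
  calc (cP j).natDegree ≤ (Polynomial.C (((2 * j + 1).factorial : ℝ))⁻¹).natDegree +
        (Polynomial.X * ∏ i ∈ Finset.Icc 1 j,
          (Polynomial.X ^ 2 - Polynomial.C ((i : ℝ) ^ 2))).natDegree := natDegree_mul_le
    _ ≤ 0 + (1 + 2 * j) := by simp only [natDegree_C]; omega
    _ = 2 * j + 1 := by omega


noncomputable def gP (k : ℕ) : Polynomial ℝ :=
  ∑ j ∈ Finset.range (k + 1), Polynomial.C ((-1 : ℝ) ^ j) * cP j

open Polynomial in
lemma gP_eval (k : ℕ) (x : ℝ) : (gP k).eval x = g k x := by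
  rw [gP, g, eval_finset_sum]
  exact Finset.sum_congr rfl fun j _ => by rw [eval_mul, eval_C, cP_eval]

open Polynomial in
lemma gP_natDegree_le (k : ℕ) : (gP k).natDegree ≤ 2 * k + 1 := by
  refine natDegree_sum_le_of_forall_le _ _ fun j hj => ?_
  have hj' : j ≤ k := by simpa [Nat.lt_succ_iff] using hj
  calc (Polynomial.C ((-1 : ℝ) ^ j) * cP j).natDegree
      ≤ (Polynomial.C ((-1 : ℝ) ^ j)).natDegree + (cP j).natDegree := natDegree_mul_le
    _ ≤ 0 + (2 * j + 1) := by have := cP_natDegree_le j; simp only [natDegree_C]; omega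
    _ ≤ 2 * k + 1 := by omega

open Polynomial in
lemma gP_iterate_deriv_zero (k : ℕ) : derivative^[2 * k + 3] (gP k) = 0 :=
  iterate_derivative_eq_zero (lt_of_le_of_lt (gP_natDegree_le k) (by omega))

open Polynomial in
lemma nodePoly_iterate_deriv (n : ℕ) (a : Fin (n + 1) → ℝ) :
    derivative^[n + 1] (∏ i, (X - C (a i))) = C (((n + 1).factorial : ℝ)) := by
  set N := ∏ i, (X - C (a i)) with hN
  have hmonic : N.Monic := monic_prod_of_monic _ _ fun i _ => monic_X_sub_C (a i)
  have hdeg : N.natDegree = n + 1 := by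
    rw [hN, natDegree_prod_of_monic _ _ fun i _ => monic_X_sub_C (a i)]
    simp [natDegree_X_sub_C]
  have hdeg2 : (derivative^[n + 1] N).natDegree = 0 := by
    have := natDegree_iterate_derivative N (n + 1)
    omega
  have hcoeff : (derivative^[n + 1] N).coeff 0 = ((n + 1).factorial : ℝ) := by
    rw [coeff_iterate_derivative]
    simp only [Nat.zero_add]
    rw [Nat.descFactorial_self]
    have : N.coeff (n + 1) = 1 := by
      have := hmonic.leadingCoeff
      rwa [leadingCoeff, hdeg] at this
    rw [this]
    simp
  have := eq_C_of_natDegree_le_zero (le_of_eq hdeg2)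
  rw [this, hcoeff]


lemma hasDerivAt_sin_lin (A cc θ : ℝ) (x : ℝ) :
    HasDerivAt (fun y : ℝ => A * Real.sin (cc * y + θ))
      (A * (cc * Real.sin (cc * x + θ + Real.pi / 2))) x := by
  have h1 : HasDerivAt (fun y : ℝ => cc * y + θ) cc x := by
    simpa using ((hasDerivAt_id x).const_mul cc).add_const θ
  have h2 := (Real.hasDerivAt_sin (cc * x + θ)).comp x h1
  have h3 := h2.const_mul A
  have : Real.cos (cc * x + θ) = Real.sin (cc * x + θ + Real.pi / 2) :=
    (Real.sin_add_pi_div_two _).symm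
  simpa [this, mul_comm, mul_assoc, mul_left_comm] using h3

lemma iteratedDeriv_sin_lin (cc : ℝ) : ∀ (n : ℕ) (A θ : ℝ),
    iteratedDeriv n (fun y : ℝ => A * Real.sin (cc * y + θ)) =
      fun y : ℝ => A * cc ^ n * Real.sin (cc * y + θ + n * (Real.pi / 2)) := by
  intro n
  induction n with
  | zero => intro A θ; simp
  | succ n ih =>
    intro A θ
    rw [iteratedDeriv_succ']
    have hder : deriv (fun y : ℝ => A * Real.sin (cc * y + θ)) =
        fun y : ℝ => (A * cc) * Real.sin (cc * y + (θ + Real.pi / 2)) := by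
      funext y
      have := (hasDerivAt_sin_lin A cc θ y).deriv
      rw [this]; ring_nf
    rw [hder, ih (A * cc) (θ + Real.pi / 2)]
    funext y
    push_cast
    ring_nf

lemma contDiff_sin_lin (A cc θ : ℝ) :
    ContDiff ℝ (⊤ : ℕ∞) (fun y : ℝ => A * Real.sin (cc * y + θ)) := by
  exact contDiff_const.mul (Real.contDiff_sin.comp ((contDiff_const.mul contDiff_id).add contDiff_const))

lemma fl_eq_sin_lin : fl = fun y : ℝ => (2 / Real.sqrt 3) * Real.sin ((Real.pi / 3) * y + 0) := by
  funext y; rw [fl]; ring_nf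

lemma contDiff_fl : ContDiff ℝ (⊤ : ℕ∞) fl := by
  rw [fl_eq_sin_lin]; exact contDiff_sin_lin _ _ _

lemma iteratedDeriv_fl_bound (n : ℕ) (x : ℝ) :
    |iteratedDeriv n fl x| ≤ 2 / Real.sqrt 3 * (Real.pi / 3) ^ n := by
  rw [fl_eq_sin_lin, iteratedDeriv_sin_lin (Real.pi / 3) n (2 / Real.sqrt 3) 0]
  have h1 : (0:ℝ) ≤ 2 / Real.sqrt 3 := by positivity
  have h2 : (0:ℝ) ≤ (Real.pi / 3) ^ n := by positivity
  calc |2 / Real.sqrt 3 * (Real.pi / 3) ^ n * Real.sin ((Real.pi / 3) * x + 0 + n * (Real.pi / 2))|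
      = 2 / Real.sqrt 3 * (Real.pi / 3) ^ n * |Real.sin _| := by
        rw [abs_mul, abs_of_nonneg (by positivity)]
    _ ≤ 2 / Real.sqrt 3 * (Real.pi / 3) ^ n * 1 := by
        gcongr; exact Real.abs_sin_le_one _
    _ = 2 / Real.sqrt 3 * (Real.pi / 3) ^ n := by ring

lemma deriv_fl (x : ℝ) :
    deriv fl x = 2 * Real.pi / (3 * Real.sqrt 3) * Real.cos (Real.pi * x / 3) := by
  have h1 : HasDerivAt (fun y : ℝ => (2 / Real.sqrt 3) * Real.sin ((Real.pi / 3) * y + 0))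
      ((2 / Real.sqrt 3) * ((Real.pi / 3) *
        Real.sin ((Real.pi / 3) * x + 0 + Real.pi / 2))) x := hasDerivAt_sin_lin _ _ _ _
  rw [fl_eq_sin_lin]
  rw [h1.deriv, Real.sin_add_pi_div_two]
  rw [show (Real.pi / 3) * x + 0 = Real.pi * x / 3 by ring]
  ring


lemma fin_rolle : ∀ (n : ℕ) (h : ℝ → ℝ), ContDiff ℝ (⊤ : ℕ∞) h →
    ∀ (a : Fin (n + 1) → ℝ), StrictMono a → (∀ i, h (a i) = 0) →
    ∃ ξ ∈ Set.Icc (a 0) (a (Fin.last n)), iteratedDeriv n h ξ = 0 := by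
  intro n
  induction n with
  | zero =>
    intro h _ a _ hz
    exact ⟨a 0, ⟨le_refl _, le_of_eq rfl⟩, by simpa using hz 0⟩
  | succ n ih =>
    intro h hsm a hmono hz
    have hcont : ∀ i : Fin (n + 1), ∃ y ∈ Set.Ioo (a i.castSucc) (a i.succ), deriv h y = 0 := by
      intro i
      exact exists_deriv_eq_zero (hmono (Fin.castSucc_lt_succ (i := i)))
        hsm.continuous.continuousOn ((hz i.castSucc).trans (hz i.succ).symm)
    choose b hb1 hb2 using hcont
    have hbmono : StrictMono b := by
      refine Fin.strictMono_iff_lt_succ.2 fun i => ?_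
      have h1 := (hb1 i.castSucc).2
      have h2 := (hb1 i.succ).1
      have heq : (i.castSucc).succ = (i.succ).castSucc := rfl
      rw [heq] at h1
      exact lt_trans h1 h2
    have hder : ContDiff ℝ (⊤ : ℕ∞) (deriv h) := (contDiff_infty_iff_deriv.mp hsm).2
    obtain ⟨ξ, hξ, hξ0⟩ := ih (deriv h) hder b hbmono hb2
    refine ⟨ξ, ⟨?_, ?_⟩, ?_⟩
    · have : a 0 ≤ b 0 := by
        have := (hb1 0).1
        simpa using le_of_lt this
      exact le_trans this hξ.1
    · have : b (Fin.last n) ≤ a (Fin.last (n + 1)) := by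
        have := (hb1 (Fin.last n)).2
        have heq : (Fin.last n).succ = Fin.last (n + 1) := Fin.succ_last n
        rw [heq] at this
        exact le_of_lt this
      exact le_trans hξ.2 this
    · rw [iteratedDeriv_succ']
      exact hξ0

lemma iteratedDeriv_sub' : ∀ (n : ℕ) (u v : ℝ → ℝ), ContDiff ℝ (⊤ : ℕ∞) u → ContDiff ℝ (⊤ : ℕ∞) v →
    iteratedDeriv n (fun t => u t - v t) = fun t => iteratedDeriv n u t - iteratedDeriv n v t := by
  intro n
  induction n with
  | zero => intro u v _ _; simp
  | succ n ih =>
    intro u v hu hv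
    rw [iteratedDeriv_succ', iteratedDeriv_succ', iteratedDeriv_succ']
    have hd : deriv (fun t => u t - v t) = fun t => deriv u t - deriv v t := by
      funext t
      exact deriv_sub ((contDiff_infty_iff_deriv.mp hu).1 t) ((contDiff_infty_iff_deriv.mp hv).1 t)
    rw [hd]
    exact ih (deriv u) (deriv v) (contDiff_infty_iff_deriv.mp hu).2 (contDiff_infty_iff_deriv.mp hv).2

open Polynomial in
lemma remainder_lemma (n : ℕ) (h : ℝ → ℝ) (hsm : ContDiff ℝ (⊤ : ℕ∞) h)
    (a : Fin (n + 1) → ℝ) (hmono : StrictMono a) (hz : ∀ i, h (a i) = 0)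
    (x : ℝ) (hx : x ∈ Set.Icc (a 0) (a (Fin.last n))) :
    ∃ ξ ∈ Set.Icc (a 0) (a (Fin.last n)),
      h x = iteratedDeriv (n + 1) h ξ / ((n + 1).factorial : ℝ) * ∏ i, (x - a i) := by
  have ha0last : a 0 ≤ a (Fin.last n) := hmono.monotone (Fin.zero_le _)
  by_cases hxa : ∃ i, x = a i
  · obtain ⟨i, rfl⟩ := hxa
    refine ⟨a 0, ⟨le_refl _, ha0last⟩, ?_⟩
    rw [hz i, Finset.prod_eq_zero (Finset.mem_univ i) (by ring), mul_zero]
  · push_neg at hxa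
    set NP : Polynomial ℝ := ∏ i, (X - C (a i)) with hNP
    have hNPeval : ∀ t : ℝ, NP.eval t = ∏ i, (t - a i) := by
      intro t; rw [hNP, eval_prod]; simp
    have hNx : NP.eval x ≠ 0 := by
      rw [hNPeval]
      exact Finset.prod_ne_zero_iff.2 fun i _ => sub_ne_zero.2 (hxa i)
    set lam : ℝ := h x / NP.eval x with hlam
    set φ : ℝ → ℝ := fun t => h t - lam * NP.eval t with hφ
    have hφsm : ContDiff ℝ (⊤ : ℕ∞) φ := by
      have : ContDiff ℝ (⊤ : ℕ∞) (fun t : ℝ => (C lam * NP).eval t) := contDiff_eval _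
      simpa [hφ, eval_mul, eval_C] using hsm.sub (contDiff_const.mul (contDiff_eval NP))
    -- the finset of nodes together with x
    have hainj : Function.Injective a := hmono.injective
    set S : Finset ℝ := insert x (Finset.image a Finset.univ) with hS
    have hxnotmem : x ∉ Finset.image a Finset.univ := by
      simp only [Finset.mem_image, Finset.mem_univ, true_and]
      rintro ⟨i, hi⟩; exact hxa i hi.symm
    have hcard : S.card = n + 2 := by
      rw [hS, Finset.card_insert_of_notMem hxnotmem,
        Finset.card_image_of_injective _ hainj]
      simp
    set e := S.orderIsoOfFin hcard with he
    set b : Fin (n + 2) → ℝ := fun i => (e i : ℝ) with hb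
    have hbmono : StrictMono b := fun i j hij => by
      exact_mod_cast e.strictMono hij
    have hbS : ∀ i, b i ∈ S := fun i => (e i).2
    have hφb : ∀ i, φ (b i) = 0 := by
      intro i
      rcases Finset.mem_insert.1 (hbS i) with hbx | hbi
      · rw [hbx, hφ]
        simp only
        rw [hlam, div_mul_cancel₀ _ hNx, sub_self]
      · obtain ⟨j, _, hj⟩ := Finset.mem_image.1 hbi
        rw [← hj, hφ]
        simp only
        rw [hz j, hNPeval, Finset.prod_eq_zero (Finset.mem_univ j) (by ring), mul_zero, sub_zero]
    obtain ⟨ξ, hξmem, hξ0⟩ := fin_rolle (n + 1) φ hφsm b hbmono hφb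
    have hSbound : ∀ y ∈ S, a 0 ≤ y ∧ y ≤ a (Fin.last n) := by
      intro y hy
      rcases Finset.mem_insert.1 hy with rfl | hyi
      · exact ⟨hx.1, hx.2⟩
      · obtain ⟨j, _, hj⟩ := Finset.mem_image.1 hyi
        rw [← hj]
        exact ⟨hmono.monotone (Fin.zero_le _), hmono.monotone (Fin.le_last _)⟩
    have hmem' : ξ ∈ Set.Icc (a 0) (a (Fin.last n)) := by
      constructor
      · exact le_trans (hSbound _ (hbS 0)).1 hξmem.1
      · exact le_trans hξmem.2 (hSbound _ (hbS (Fin.last (n + 1)))).2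
    refine ⟨ξ, hmem', ?_⟩
    -- compute iterated derivative of φ
    have hiter : iteratedDeriv (n + 1) φ ξ
        = iteratedDeriv (n + 1) h ξ - lam * ((n + 1).factorial : ℝ) := by
      have hsub : iteratedDeriv (n + 1) φ
          = fun t => iteratedDeriv (n + 1) h t - iteratedDeriv (n + 1) (fun u => (C lam * NP).eval u) t := by
        have h2 : φ = fun t => h t - (fun u => (C lam * NP).eval u) t := by
          funext t; rw [hφ]; simp
        rw [h2]
        exact iteratedDeriv_sub' (n + 1) _ _ hsm (contDiff_eval _)
      rw [hsub]
      rw [iteratedDeriv_eval]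
      rw [iterate_derivative_C_mul, nodePoly_iterate_deriv n a]
      simp
    rw [hiter] at hξ0
    have hval : iteratedDeriv (n + 1) h ξ = lam * ((n + 1).factorial : ℝ) := by linarith
    rw [hval, hlam]
    have hfac : ((n + 1).factorial : ℝ) ≠ 0 := Nat.cast_ne_zero.2 (Nat.factorial_ne_zero _)
    rw [← hNPeval]
    field_simp


noncomputable def D (R k : ℕ) : ℝ := ∏ i ∈ Finset.range (k + 1), ((R : ℝ) + 1 + i)
noncomputable def E (R k : ℕ) : ℝ := ∏ i ∈ Finset.range (k + 1), ((R : ℝ) + 2 + i)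

lemma D_pos (R k : ℕ) : 0 < D R k := Finset.prod_pos fun i _ => by positivity
lemma E_pos (R k : ℕ) : 0 < E R k := Finset.prod_pos fun i _ => by positivity

/-- the interpolation nodes -/
noncomputable def nodes (k : ℕ) : Fin (2 * k + 2 + 1) → ℝ := fun i => (i : ℝ) - ((k : ℝ) + 1)

lemma nodes_strictMono (k : ℕ) : StrictMono (nodes k) := by
  intro i j hij
  have : (i : ℝ) < (j : ℝ) := by exact_mod_cast hij
  simp only [nodes]
  linarith

noncomputable def hfun (k : ℕ) : ℝ → ℝ := fun t => fl t - (gP k).eval t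

lemma hfun_smooth (k : ℕ) : ContDiff ℝ (⊤ : ℕ∞) (hfun k) := contDiff_fl.sub (contDiff_eval _)

lemma hfun_nodes (k : ℕ) (i : Fin (2 * k + 2 + 1)) : hfun k (nodes k i) = 0 := by
  have hi : (i : ℕ) < 2 * k + 3 := i.isLt
  set n : ℤ := (i : ℤ) - ((k : ℤ) + 1) with hn
  have hcast : nodes k i = (n : ℝ) := by
    simp only [nodes, hn]
    push_cast
    ring
  have habs : |n| ≤ (k : ℤ) + 1 := by
    rw [hn, abs_le]
    constructor <;> [skip; skip] <;>
    · have : (0 : ℤ) ≤ (i : ℤ) := Int.ofNat_nonneg _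
      have h2 : (i : ℤ) < 2 * (k : ℤ) + 3 := by exact_mod_cast hi
      omega
  rw [hfun, hcast, gP_eval, g_int k n habs, sub_self]

lemma iteratedDeriv_hfun (k : ℕ) (ξ : ℝ) :
    iteratedDeriv (2 * k + 3) (hfun k) ξ = iteratedDeriv (2 * k + 3) fl ξ := by
  have : hfun k = fun t => fl t - (fun u => (gP k).eval u) t := rfl
  rw [this, iteratedDeriv_sub' _ _ _ contDiff_fl (contDiff_eval _)]
  simp only
  rw [iteratedDeriv_eval, gP_iterate_deriv_zero k]
  simp

lemma prod_bound_fn (R k : ℕ) :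
    ∏ i ∈ Finset.range (2 * k + 3), ((R : ℝ) + |(i : ℝ) - ((k : ℝ) + 1)|)
      = (R : ℝ) * (D R k) ^ 2 := by
  have hsplit : 2 * k + 3 = (k + 1) + (k + 2) := by ring
  rw [hsplit, Finset.prod_range_add]
  have hA : ∏ i ∈ Finset.range (k + 1), ((R : ℝ) + |(i : ℝ) - ((k : ℝ) + 1)|) = D R k := by
    have h1 : ∀ i ∈ Finset.range (k + 1),
        (R : ℝ) + |(i : ℝ) - ((k : ℝ) + 1)| = (R : ℝ) + 1 + ((k - i : ℕ) : ℝ) := by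
      intro i hi
      have hik : i ≤ k := by simpa [Nat.lt_succ_iff] using hi
      have hile : (i : ℝ) ≤ (k : ℝ) := by exact_mod_cast hik
      have : |(i : ℝ) - ((k : ℝ) + 1)| = ((k : ℝ) + 1) - i := by
        rw [abs_of_nonpos (by linarith)]
        ring
      rw [this, Nat.cast_sub hik]
      ring
    rw [Finset.prod_congr rfl h1]
    have h2 := Finset.prod_range_reflect (fun j : ℕ => (R : ℝ) + 1 + j) (k + 1)
    have h3 : ∀ i ∈ Finset.range (k + 1),
        (R : ℝ) + 1 + ((k - i : ℕ) : ℝ) = (R : ℝ) + 1 + ((k + 1 - 1 - i : ℕ) : ℝ) := by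
      intro i _; norm_num
    rw [Finset.prod_congr rfl h3, h2, D]
  have hB : ∏ i ∈ Finset.range (k + 2),
      ((R : ℝ) + |((k + 1 + i : ℕ) : ℝ) - ((k : ℝ) + 1)|) = (R : ℝ) * D R k := by
    have h1 : ∀ i ∈ Finset.range (k + 2),
        (R : ℝ) + |((k + 1 + i : ℕ) : ℝ) - ((k : ℝ) + 1)| = (R : ℝ) + i := by
      intro i _
      have : ((k + 1 + i : ℕ) : ℝ) - ((k : ℝ) + 1) = (i : ℝ) := by push_cast; ring
      rw [this, abs_of_nonneg (by positivity)]
    rw [Finset.prod_congr rfl h1, Finset.prod_range_succ' (fun i : ℕ => (R : ℝ) + i) (k + 1)]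
    have h4 : ∀ i ∈ Finset.range (k + 1), (R : ℝ) + ((i + 1 : ℕ) : ℝ) = (R : ℝ) + 1 + i := by
      intro i _; push_cast; ring
    rw [Finset.prod_congr rfl h4, D]
    push_cast
    ring
  calc (∏ i ∈ Finset.range (k + 1), ((R : ℝ) + |(i : ℝ) - ((k : ℝ) + 1)|)) *
        ∏ i ∈ Finset.range (k + 2), ((R : ℝ) + |((k + 1 + i : ℕ) : ℝ) - ((k : ℝ) + 1)|)
      = D R k * ((R : ℝ) * D R k) := by rw [hA, hB]
    _ = (R : ℝ) * (D R k) ^ 2 := by ring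

lemma err_bound (R k : ℕ) (hk : R ≤ k) (x : ℝ) (hx : |x| ≤ R) :
    |fl x - g k x| ≤
      2 / Real.sqrt 3 * (Real.pi / 3) ^ (2 * k + 3) / ((2 * k + 3).factorial : ℝ)
        * ((R : ℝ) * (D R k) ^ 2) := by
  have hxR : -(R : ℝ) ≤ x ∧ x ≤ R := abs_le.1 hx
  have hmem : x ∈ Set.Icc (nodes k 0) (nodes k (Fin.last (2 * k + 2))) := by
    constructor
    · have : nodes k 0 = -((k : ℝ) + 1) := by simp [nodes]
      rw [this]
      have : (R : ℝ) ≤ (k : ℝ) + 1 := by exact_mod_cast Nat.le_succ_of_le hk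
      linarith [hxR.1]
    · have : nodes k (Fin.last (2 * k + 2)) = (k : ℝ) + 1 := by
        simp [nodes, Fin.val_last]
        push_cast
        ring
      rw [this]
      have : (R : ℝ) ≤ (k : ℝ) + 1 := by exact_mod_cast Nat.le_succ_of_le hk
      linarith [hxR.2]
  obtain ⟨ξ, hξmem, hξeq⟩ := remainder_lemma (2 * k + 2) (hfun k) (hfun_smooth k)
    (nodes k) (nodes_strictMono k) (hfun_nodes k) x hmem
  have hflg : fl x - g k x = hfun k x := by rw [hfun, gP_eval]
  rw [hflg, hξeq]
  rw [iteratedDeriv_hfun]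
  rw [abs_mul, abs_div]
  have hprodb : |∏ i : Fin (2 * k + 2 + 1), (x - nodes k i)| ≤ (R : ℝ) * (D R k) ^ 2 := by
    rw [Finset.abs_prod]
    have hfin : ∏ i : Fin (2 * k + 2 + 1), |x - nodes k i|
        = ∏ i ∈ Finset.range (2 * k + 3), |x - ((i : ℝ) - ((k : ℝ) + 1))| := by
      exact Fin.prod_univ_eq_prod_range (fun i => |x - ((i : ℝ) - ((k : ℝ) + 1))|) (2 * k + 3)
    rw [hfin, ← prod_bound_fn R k]
    refine Finset.prod_le_prod (fun i _ => abs_nonneg _) fun i _ => ?_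
    have h1 : |x - ((i : ℝ) - ((k : ℝ) + 1))| ≤ |x| + |(i : ℝ) - ((k : ℝ) + 1)| := abs_sub _ _
    have h2 : |x| ≤ (R : ℝ) := hx
    linarith
  have hder : |iteratedDeriv (2 * k + 3) fl ξ| ≤ 2 / Real.sqrt 3 * (Real.pi / 3) ^ (2 * k + 3) :=
    iteratedDeriv_fl_bound _ _
  have hfac : |((2 * k + 2 + 1).factorial : ℝ)| = ((2 * k + 3).factorial : ℝ) := by
    rw [abs_of_nonneg (by positivity)]
  rw [hfac]
  have hfacpos : (0 : ℝ) < ((2 * k + 3).factorial : ℝ) := by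
    exact_mod_cast Nat.factorial_pos _
  calc |iteratedDeriv (2 * k + 3) fl ξ| / ((2 * k + 3).factorial : ℝ)
        * |∏ i : Fin (2 * k + 2 + 1), (x - nodes k i)|
      ≤ (2 / Real.sqrt 3 * (Real.pi / 3) ^ (2 * k + 3)) / ((2 * k + 3).factorial : ℝ)
        * ((R : ℝ) * (D R k) ^ 2) := by
        apply mul_le_mul _ hprodb (abs_nonneg _) (by positivity)
        exact (div_le_div_iff_of_pos_right hfacpos).2 hder
    _ = _ := by ring


lemma deriv_hfun (k : ℕ) :
    deriv (hfun k) = fun t => deriv fl t - (Polynomial.derivative (gP k)).eval t := by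
  funext t
  have h1 : DifferentiableAt ℝ fl t := (contDiff_infty_iff_deriv.mp contDiff_fl).1 t
  have h2 : DifferentiableAt ℝ (fun u : ℝ => (gP k).eval u) t :=
    (contDiff_infty_iff_deriv.mp (contDiff_eval _)).1 t
  have : hfun k = fun u => fl u - (gP k).eval u := rfl
  rw [this, deriv_fun_sub h1 h2, Polynomial.deriv]

lemma prod_bound_der (R k : ℕ) :
    ∏ i ∈ Finset.range (2 * k + 2), ((R : ℝ) + 1 + |(i : ℝ) - (k : ℝ)|)
      = D R k * E R k := by
  have hsplit : 2 * k + 2 = (k + 1) + (k + 1) := by ring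
  rw [hsplit, Finset.prod_range_add]
  have hA : ∏ i ∈ Finset.range (k + 1), ((R : ℝ) + 1 + |(i : ℝ) - (k : ℝ)|) = D R k := by
    have h1 : ∀ i ∈ Finset.range (k + 1),
        (R : ℝ) + 1 + |(i : ℝ) - (k : ℝ)| = (R : ℝ) + 1 + ((k - i : ℕ) : ℝ) := by
      intro i hi
      have hik : i ≤ k := by simpa [Nat.lt_succ_iff] using hi
      have hile : (i : ℝ) ≤ (k : ℝ) := by exact_mod_cast hik
      have : |(i : ℝ) - (k : ℝ)| = (k : ℝ) - i := by
        rw [abs_of_nonpos (by linarith)]; ring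
      rw [this, Nat.cast_sub hik]
    rw [Finset.prod_congr rfl h1]
    have h2 := Finset.prod_range_reflect (fun j : ℕ => (R : ℝ) + 1 + j) (k + 1)
    have h3 : ∀ i ∈ Finset.range (k + 1),
        (R : ℝ) + 1 + ((k - i : ℕ) : ℝ) = (R : ℝ) + 1 + ((k + 1 - 1 - i : ℕ) : ℝ) := by
      intro i _; norm_num
    rw [Finset.prod_congr rfl h3, h2, D]
  have hB : ∏ i ∈ Finset.range (k + 1),
      ((R : ℝ) + 1 + |((k + 1 + i : ℕ) : ℝ) - (k : ℝ)|) = E R k := by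
    have h1 : ∀ i ∈ Finset.range (k + 1),
        (R : ℝ) + 1 + |((k + 1 + i : ℕ) : ℝ) - (k : ℝ)| = (R : ℝ) + 2 + i := by
      intro i _
      have : ((k + 1 + i : ℕ) : ℝ) - (k : ℝ) = (i : ℝ) + 1 := by push_cast; ring
      rw [this, abs_of_nonneg (by positivity)]
      ring
    rw [Finset.prod_congr rfl h1, E]
  rw [hA, hB]

lemma err_bound' (R k : ℕ) (hk : R ≤ k) (x : ℝ) (hx : |x| ≤ R) :
    |deriv fl x - (Polynomial.derivative (gP k)).eval x| ≤
      2 / Real.sqrt 3 * (Real.pi / 3) ^ (2 * k + 3) / ((2 * k + 2).factorial : ℝ)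
        * (D R k * E R k) := by
  have hxR : -(R : ℝ) ≤ x ∧ x ≤ R := abs_le.1 hx
  -- Rolle between consecutive nodes
  have hroll : ∀ i : Fin (2 * k + 2), ∃ y ∈ Set.Ioo (nodes k i.castSucc) (nodes k i.succ),
      deriv (hfun k) y = 0 := by
    intro i
    exact exists_deriv_eq_zero (nodes_strictMono k (Fin.castSucc_lt_succ (i := i)))
      (hfun_smooth k).continuous.continuousOn
      ((hfun_nodes k i.castSucc).trans (hfun_nodes k i.succ).symm)
  choose b hb1 hb2 using hroll
  have hbmono : StrictMono b := by
    refine Fin.strictMono_iff_lt_succ.2 fun i => ?_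
    have h1 := (hb1 i.castSucc).2
    have h2 := (hb1 i.succ).1
    have heq : (i.castSucc).succ = (i.succ).castSucc := rfl
    rw [heq] at h1
    exact lt_trans h1 h2
  -- bounds on node positions
  have hnode_val : ∀ i : Fin (2 * k + 2 + 1), nodes k i = (i : ℝ) - ((k : ℝ) + 1) := fun _ => rfl
  have hbIoo : ∀ i : Fin (2 * k + 2),
      ((i : ℕ) : ℝ) - ((k : ℝ) + 1) < b i ∧ b i < ((i : ℕ) : ℝ) - (k : ℝ) := by
    intro i
    have h1 := (hb1 i).1
    have h2 := (hb1 i).2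
    rw [hnode_val] at h1 h2
    constructor
    · simpa [Fin.coe_castSucc] using h1
    · have : ((i.succ : ℕ) : ℝ) = (i : ℝ) + 1 := by
        rw [Fin.val_succ]; push_cast; ring
      rw [this] at h2
      linarith
  -- b is Fin (2k+2) = Fin ((2k+1)+1), apply remainder to deriv hfun
  have hsm' : ContDiff ℝ (⊤ : ℕ∞) (deriv (hfun k)) :=
    (contDiff_infty_iff_deriv.mp (hfun_smooth k)).2
  have hkR : (R : ℝ) ≤ (k : ℝ) := by exact_mod_cast hk
  have hmem : x ∈ Set.Icc (b 0) (b (Fin.last (2 * k + 1))) := by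
    constructor
    · have h := (hbIoo 0).2
      simp only [Fin.val_zero, Nat.cast_zero] at h
      have : b 0 < -(k : ℝ) := by linarith
      linarith [hxR.1]
    · have h := (hbIoo (Fin.last (2 * k + 1))).1
      have hval : ((Fin.last (2 * k + 1) : ℕ) : ℝ) = 2 * (k : ℝ) + 1 := by
        rw [Fin.val_last]; push_cast; ring
      rw [hval] at h
      have : (k : ℝ) < b (Fin.last (2 * k + 1)) := by linarith
      linarith [hxR.2]
  obtain ⟨ξ, hξmem, hξeq⟩ := remainder_lemma (2 * k + 1) (deriv (hfun k)) hsm'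
    b hbmono hb2 x hmem
  have hid : iteratedDeriv (2 * k + 1 + 1) (deriv (hfun k)) ξ = iteratedDeriv (2 * k + 3) fl ξ := by
    rw [← iteratedDeriv_succ']
    exact iteratedDeriv_hfun k ξ
  have hflg : deriv fl x - (Polynomial.derivative (gP k)).eval x = deriv (hfun k) x := by
    rw [deriv_hfun]
  rw [hflg, hξeq, hid]
  rw [abs_mul, abs_div]
  have hprodb : |∏ i : Fin (2 * k + 1 + 1), (x - b i)| ≤ D R k * E R k := by
    rw [Finset.abs_prod]
    have hstep : ∀ i : Fin (2 * k + 1 + 1), |x - b i| ≤ (R : ℝ) + 1 + |(i : ℝ) - (k : ℝ)| := by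
      intro i
      have h := hbIoo i
      have habs1 : -( |(i : ℝ) - (k : ℝ)| ) ≤ (i : ℝ) - (k : ℝ) := neg_abs_le _
      have habs2 : (i : ℝ) - (k : ℝ) ≤ |(i : ℝ) - (k : ℝ)| := le_abs_self _
      rw [abs_le]
      constructor
      · have := h.2
        nlinarith [hxR.1]
      · have := h.1
        nlinarith [hxR.2]
    have hfin : ∏ i : Fin (2 * k + 1 + 1), |x - b i|
        ≤ ∏ i : Fin (2 * k + 1 + 1), ((R : ℝ) + 1 + |(i : ℝ) - (k : ℝ)|) :=
      Finset.prod_le_prod (fun i _ => abs_nonneg _) fun i _ => hstep i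
    refine hfin.trans (le_of_eq ?_)
    have : ∏ i : Fin (2 * k + 1 + 1), ((R : ℝ) + 1 + |(i : ℝ) - (k : ℝ)|)
        = ∏ i ∈ Finset.range (2 * k + 2), ((R : ℝ) + 1 + |(i : ℝ) - (k : ℝ)|) :=
      Fin.prod_univ_eq_prod_range (fun i => (R : ℝ) + 1 + |(i : ℝ) - (k : ℝ)|) (2 * k + 2)
    rw [this, prod_bound_der]
  have hder : |iteratedDeriv (2 * k + 3) fl ξ| ≤ 2 / Real.sqrt 3 * (Real.pi / 3) ^ (2 * k + 3) :=
    iteratedDeriv_fl_bound _ _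
  have hfac : |((2 * k + 1 + 1).factorial : ℝ)| = ((2 * k + 2).factorial : ℝ) := by
    rw [abs_of_nonneg (by positivity)]
  rw [hfac]
  have hfacpos : (0 : ℝ) < ((2 * k + 2).factorial : ℝ) := by
    exact_mod_cast Nat.factorial_pos _
  calc |iteratedDeriv (2 * k + 3) fl ξ| / ((2 * k + 2).factorial : ℝ)
        * |∏ i : Fin (2 * k + 1 + 1), (x - b i)|
      ≤ (2 / Real.sqrt 3 * (Real.pi / 3) ^ (2 * k + 3)) / ((2 * k + 2).factorial : ℝ)
        * (D R k * E R k) := by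
        apply mul_le_mul _ hprodb (abs_nonneg _) (by positivity)
        exact (div_le_div_iff_of_pos_right hfacpos).2 hder
    _ = _ := by ring


noncomputable def Bnd (R k : ℕ) : ℝ :=
  2 / Real.sqrt 3 * (Real.pi / 3) ^ (2 * k + 3) / ((2 * k + 3).factorial : ℝ)
    * ((R : ℝ) * (D R k) ^ 2)

noncomputable def Bnd' (R k : ℕ) : ℝ :=
  2 / Real.sqrt 3 * (Real.pi / 3) ^ (2 * k + 3) / ((2 * k + 2).factorial : ℝ)
    * (D R k * E R k)

lemma Bnd_nonneg (R k : ℕ) : 0 ≤ Bnd R k := by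
  have := (D_pos R k).le
  unfold Bnd
  positivity

lemma Bnd'_nonneg (R k : ℕ) : 0 ≤ Bnd' R k := by
  have := (D_pos R k).le
  have := (E_pos R k).le
  unfold Bnd'
  positivity

lemma pi_sq_bound : (Real.pi / 3) ^ 2 ≤ 1.2 := by
  have h := Real.pi_lt_d2
  have h0 := Real.pi_pos
  nlinarith

lemma key_ineq (R k : ℕ) (hk : 2 * R + 2 ≤ k) :
    (Real.pi / 3) ^ 2 * ((R : ℝ) + k + 2) ^ 2 ≤ (9 / 10) * ((2 * k + 4) * (2 * k + 5)) := by
  have h1 : (R : ℝ) ≤ (k : ℝ) / 2 := by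
    have : (2 * R : ℝ) ≤ (k : ℝ) := by exact_mod_cast le_trans (by omega) hk
    linarith
  have h2 : (0 : ℝ) ≤ (R : ℝ) := Nat.cast_nonneg _
  have h3 : (Real.pi / 3) ^ 2 ≤ 1.2 := pi_sq_bound
  have h4 : (0 : ℝ) ≤ ((R : ℝ) + k + 2) ^ 2 := sq_nonneg _
  have h5 : ((R : ℝ) + k + 2) ≤ (3 / 2) * ((k : ℝ) + 2) := by linarith
  have h6 : ((R : ℝ) + k + 2) ^ 2 ≤ (9 / 4) * ((k : ℝ) + 2) ^ 2 := by nlinarith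
  have h7 : (9 / 10 : ℝ) * ((2 * k + 4) * (2 * k + 5)) ≥ (9 / 10) * (4 * ((k : ℝ) + 2) ^ 2) := by
    nlinarith [Nat.cast_nonneg (α := ℝ) k]
  nlinarith

lemma D_succ (R k : ℕ) : D R (k + 1) = D R k * ((R : ℝ) + k + 2) := by
  rw [D, D, Finset.prod_range_succ]
  push_cast
  ring

lemma E_succ (R k : ℕ) : E R (k + 1) = E R k * ((R : ℝ) + k + 3) := by
  rw [E, E, Finset.prod_range_succ]
  push_cast
  ring

lemma fac_cast_succ2 (m : ℕ) :
    (((m + 2).factorial : ℝ)) = ((m : ℝ) + 2) * ((m : ℝ) + 1) * (m.factorial : ℝ) := by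
  rw [Nat.factorial_succ, Nat.factorial_succ]
  push_cast
  ring

lemma Bnd_ratio (R k : ℕ) (hk : 2 * R + 2 ≤ k) : Bnd R (k + 1) ≤ (9 / 10) * Bnd R k := by
  have hfacpos : (0 : ℝ) < ((2 * k + 3).factorial : ℝ) := by exact_mod_cast Nat.factorial_pos _
  have hsq : (Real.sqrt 3) > 0 := by positivity
  have hDpos := D_pos R k
  have hfac : (((2 * (k + 1) + 3).factorial : ℝ))
      = (2 * (k : ℝ) + 5) * (2 * (k : ℝ) + 4) * ((2 * k + 3).factorial : ℝ) := by
    have h0 : 2 * (k + 1) + 3 = (2 * k + 3) + 2 := by ring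
    rw [h0, fac_cast_succ2]
    push_cast
    ring
  have hpow : (Real.pi / 3) ^ (2 * (k + 1) + 3)
      = (Real.pi / 3) ^ (2 * k + 3) * (Real.pi / 3) ^ 2 := by
    have h0 : 2 * (k + 1) + 3 = (2 * k + 3) + 2 := by ring
    rw [h0, pow_add]
  have heq : Bnd R (k + 1) = Bnd R k *
      ((Real.pi / 3) ^ 2 * ((R : ℝ) + k + 2) ^ 2 / ((2 * (k : ℝ) + 4) * (2 * (k : ℝ) + 5))) := by
    unfold Bnd
    rw [hfac, hpow, D_succ]
    field_simp
  rw [heq]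
  have hkey := key_ineq R k hk
  have hden : (0 : ℝ) < (2 * (k : ℝ) + 4) * (2 * (k : ℝ) + 5) := by positivity
  have hratio : (Real.pi / 3) ^ 2 * ((R : ℝ) + k + 2) ^ 2 / ((2 * (k : ℝ) + 4) * (2 * (k : ℝ) + 5))
      ≤ 9 / 10 := by
    rw [div_le_iff₀ hden]
    calc (Real.pi / 3) ^ 2 * ((R : ℝ) + k + 2) ^ 2
        ≤ (9 / 10) * ((2 * (k : ℝ) + 4) * (2 * (k : ℝ) + 5)) := by
          have : ((2 * k + 4 : ℕ) : ℝ) = 2 * (k : ℝ) + 4 := by push_cast; ring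
          have h2 : ((2 * k + 5 : ℕ) : ℝ) = 2 * (k : ℝ) + 5 := by push_cast; ring
          calc (Real.pi / 3) ^ 2 * ((R : ℝ) + k + 2) ^ 2
              ≤ (9 / 10) * (((2 * k + 4 : ℕ) : ℝ) * ((2 * k + 5 : ℕ) : ℝ)) := by
                convert hkey using 3 <;> push_cast <;> ring
            _ = (9 / 10) * ((2 * (k : ℝ) + 4) * (2 * (k : ℝ) + 5)) := by rw [this, h2]
      _ = _ := by ring
  calc Bnd R k * ((Real.pi / 3) ^ 2 * ((R : ℝ) + k + 2) ^ 2
        / ((2 * (k : ℝ) + 4) * (2 * (k : ℝ) + 5)))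
      ≤ Bnd R k * (9 / 10) := mul_le_mul_of_nonneg_left hratio (Bnd_nonneg R k)
    _ = (9 / 10) * Bnd R k := by ring

lemma Bnd'_ratio (R k : ℕ) (hk : 2 * R + 2 ≤ k) : Bnd' R (k + 1) ≤ (9 / 10) * Bnd' R k := by
  have hfacpos : (0 : ℝ) < ((2 * k + 2).factorial : ℝ) := by exact_mod_cast Nat.factorial_pos _
  have hDpos := D_pos R k
  have hEpos := E_pos R k
  have hfac : (((2 * (k + 1) + 2).factorial : ℝ))
      = (2 * (k : ℝ) + 4) * (2 * (k : ℝ) + 3) * ((2 * k + 2).factorial : ℝ) := by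
    have h0 : 2 * (k + 1) + 2 = (2 * k + 2) + 2 := by ring
    rw [h0, fac_cast_succ2]
    push_cast
    ring
  have hpow : (Real.pi / 3) ^ (2 * (k + 1) + 3)
      = (Real.pi / 3) ^ (2 * k + 3) * (Real.pi / 3) ^ 2 := by
    have h0 : 2 * (k + 1) + 3 = (2 * k + 3) + 2 := by ring
    rw [h0, pow_add]
  have heq : Bnd' R (k + 1) = Bnd' R k *
      ((Real.pi / 3) ^ 2 * (((R : ℝ) + k + 2) * ((R : ℝ) + k + 3))
        / ((2 * (k : ℝ) + 3) * (2 * (k : ℝ) + 4))) := by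
    unfold Bnd'
    rw [hfac, hpow, D_succ, E_succ]
    field_simp
  rw [heq]
  have hkey := key_ineq R k hk
  have hden : (0 : ℝ) < (2 * (k : ℝ) + 3) * (2 * (k : ℝ) + 4) := by positivity
  have hkR : (0:ℝ) ≤ (R:ℝ) := Nat.cast_nonneg _
  have hknn : (0:ℝ) ≤ (k:ℝ) := Nat.cast_nonneg _
  have hRk : (R : ℝ) ≤ (k : ℝ) / 2 := by
    have : (2 * R : ℝ) ≤ (k : ℝ) := by exact_mod_cast le_trans (by omega) hk
    linarith
  have hratio : (Real.pi / 3) ^ 2 * (((R : ℝ) + k + 2) * ((R : ℝ) + k + 3))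
      / ((2 * (k : ℝ) + 3) * (2 * (k : ℝ) + 4)) ≤ 9 / 10 := by
    rw [div_le_iff₀ hden]
    have h3 : (Real.pi / 3) ^ 2 ≤ 1.2 := pi_sq_bound
    have hpisq : (0:ℝ) ≤ (Real.pi / 3) ^ 2 := sq_nonneg _
    have hk2 : (2:ℝ) ≤ k := by
      have : (2:ℕ) ≤ k := by omega
      exact_mod_cast this
    nlinarith [sq_nonneg ((k:ℝ) + 2), sq_nonneg ((R:ℝ) + k)]
  calc Bnd' R k * ((Real.pi / 3) ^ 2 * (((R : ℝ) + k + 2) * ((R : ℝ) + k + 3))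
        / ((2 * (k : ℝ) + 3) * (2 * (k : ℝ) + 4)))
      ≤ Bnd' R k * (9 / 10) := mul_le_mul_of_nonneg_left hratio (Bnd'_nonneg R k)
    _ = (9 / 10) * Bnd' R k := by ring

lemma tendsto_Bnd (R : ℕ) : Filter.Tendsto (Bnd R) Filter.atTop (nhds 0) := by
  have hsum : Summable (Bnd R) := by
    refine summable_of_ratio_norm_eventually_le (r := 9 / 10) (by norm_num) ?_
    filter_upwards [Filter.eventually_ge_atTop (2 * R + 2)] with k hk
    rw [Real.norm_eq_abs, Real.norm_eq_abs, abs_of_nonneg (Bnd_nonneg R _),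
      abs_of_nonneg (Bnd_nonneg R _)]
    exact Bnd_ratio R k hk
  exact hsum.tendsto_atTop_zero

lemma tendsto_Bnd' (R : ℕ) : Filter.Tendsto (Bnd' R) Filter.atTop (nhds 0) := by
  have hsum : Summable (Bnd' R) := by
    refine summable_of_ratio_norm_eventually_le (r := 9 / 10) (by norm_num) ?_
    filter_upwards [Filter.eventually_ge_atTop (2 * R + 2)] with k hk
    rw [Real.norm_eq_abs, Real.norm_eq_abs, abs_of_nonneg (Bnd'_nonneg R _),
      abs_of_nonneg (Bnd'_nonneg R _)]
    exact Bnd'_ratio R k hk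
  exact hsum.tendsto_atTop_zero


lemma s_odd_eq_g (d : ℕ) (x : ℝ) : (-1 : ℝ) ^ d * s (2 * d + 1) x = g d x := by
  have h1 : (2 * d + 1) / 2 = d := by omega
  have h2 : (2 * d + 1) % 2 = 1 := by omega
  rw [s, h1, h2, Finset.mul_sum, g]
  refine Finset.sum_congr rfl fun j hj => ?_
  have hjd : j ≤ d := by simpa [Nat.lt_succ_iff] using hj
  have hsign : (-1 : ℝ) ^ d * (-1 : ℝ) ^ (d - j) = (-1 : ℝ) ^ j := by
    have h3 : d + (d - j) = 2 * (d - j) + j := by omega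
    rw [← pow_add, h3, pow_add, pow_mul, neg_one_sq, one_pow, one_mul]
  rw [← mul_assoc, hsign]

lemma neg_one_pow_sq (d : ℕ) : ((-1 : ℝ) ^ d) * ((-1 : ℝ) ^ d) = 1 := by
  rw [← pow_add, ← two_mul, pow_mul, neg_one_sq, one_pow]

lemma s_eq_gP (d : ℕ) : s (2 * d + 1) = fun y => (-1 : ℝ) ^ d * (gP d).eval y := by
  funext y
  have h := s_odd_eq_g d y
  have h2 := neg_one_pow_sq d
  rw [gP_eval, ← h, ← mul_assoc, h2, one_mul]

theorem s_odd_tendstoLocallyUniformly' :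
    TendstoLocallyUniformly (fun (d : ℕ) (x : ℝ) => (-1 : ℝ) ^ d * s (2 * d + 1) x)
      (fun x : ℝ => 2 / Real.sqrt 3 * Real.sin (Real.pi * x / 3)) Filter.atTop ∧
    TendstoLocallyUniformly (fun (d : ℕ) (x : ℝ) => (-1 : ℝ) ^ d * deriv (s (2 * d + 1)) x)
      (fun x : ℝ => 2 * Real.pi / (3 * Real.sqrt 3) * Real.cos (Real.pi * x / 3))
      Filter.atTop := by
  constructor
  · rw [tendstoLocallyUniformly_iff_forall_isCompact]
    intro K hK
    obtain ⟨r, hr⟩ := hK.isBounded.subset_closedBall 0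
    set R : ℕ := ⌈r⌉₊ + 1 with hR
    have hKR : ∀ x ∈ K, |x| ≤ (R : ℝ) := by
      intro x hx
      have := hr hx
      rw [Metric.mem_closedBall, Real.dist_eq, sub_zero] at this
      have h2 : r ≤ (⌈r⌉₊ : ℝ) := Nat.le_ceil r
      have h3 : ((⌈r⌉₊ : ℕ) : ℝ) ≤ (R : ℝ) := by
        rw [hR]; push_cast; linarith
      linarith
    rw [Metric.tendstoUniformlyOn_iff]
    intro ε hε
    have hB := tendsto_Bnd R
    have hBe : ∀ᶠ d in Filter.atTop, dist (Bnd R d) 0 < ε :=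
      (Metric.tendsto_nhds.mp hB) ε hε
    filter_upwards [hBe, Filter.eventually_ge_atTop R] with d hd1 hd2
    intro x hx
    rw [Real.dist_eq]
    have heq : (-1 : ℝ) ^ d * s (2 * d + 1) x = g d x := s_odd_eq_g d x
    rw [heq]
    have hb := err_bound R d hd2 x (hKR x hx)
    have : |Bnd R d| < ε := by rwa [Real.dist_eq, sub_zero] at hd1
    have h2 : Bnd R d ≤ |Bnd R d| := le_abs_self _
    calc |2 / Real.sqrt 3 * Real.sin (Real.pi * x / 3) - g d x| = |fl x - g d x| := rfl
      _ ≤ Bnd R d := hb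
      _ < ε := lt_of_le_of_lt h2 this
  · rw [tendstoLocallyUniformly_iff_forall_isCompact]
    intro K hK
    obtain ⟨r, hr⟩ := hK.isBounded.subset_closedBall 0
    set R : ℕ := ⌈r⌉₊ + 1 with hR
    have hKR : ∀ x ∈ K, |x| ≤ (R : ℝ) := by
      intro x hx
      have := hr hx
      rw [Metric.mem_closedBall, Real.dist_eq, sub_zero] at this
      have h2 : r ≤ (⌈r⌉₊ : ℝ) := Nat.le_ceil r
      have h3 : ((⌈r⌉₊ : ℕ) : ℝ) ≤ (R : ℝ) := by
        rw [hR]; push_cast; linarith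
      linarith
    rw [Metric.tendstoUniformlyOn_iff]
    intro ε hε
    have hB := tendsto_Bnd' R
    have hBe : ∀ᶠ d in Filter.atTop, dist (Bnd' R d) 0 < ε :=
      (Metric.tendsto_nhds.mp hB) ε hε
    filter_upwards [hBe, Filter.eventually_ge_atTop R] with d hd1 hd2
    intro x hx
    rw [Real.dist_eq]
    have heq : (-1 : ℝ) ^ d * deriv (s (2 * d + 1)) x
        = (Polynomial.derivative (gP d)).eval x := by
      rw [s_eq_gP d]
      rw [deriv_const_mul_field ((-1 : ℝ) ^ d)]
      rw [← mul_assoc, neg_one_pow_sq, one_mul]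
      exact Polynomial.deriv (p := gP d)
    rw [heq]
    have hb := err_bound' R d hd2 x (hKR x hx)
    have hfl : 2 * Real.pi / (3 * Real.sqrt 3) * Real.cos (Real.pi * x / 3) = deriv fl x :=
      (deriv_fl x).symm
    rw [hfl]
    have : |Bnd' R d| < ε := by rwa [Real.dist_eq, sub_zero] at hd1
    have h2 : Bnd' R d ≤ |Bnd' R d| := le_abs_self _
    calc |deriv fl x - (Polynomial.derivative (gP d)).eval x| ≤ Bnd' R d := hb
      _ < ε := lt_of_le_of_lt h2 this

end SOdd

/-- `(−1)^d s_{2d+1}` converges locally uniformly on `ℝ` to `(2/√3) sin(πx/3)`, and the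
derivatives `(−1)^d s_{2d+1}′` converge locally uniformly to `(2π/(3√3)) cos(πx/3)`. -/
theorem s_odd_tendstoLocallyUniformly :
    TendstoLocallyUniformly (fun (d : ℕ) (x : ℝ) => (-1 : ℝ) ^ d * s (2 * d + 1) x)
      (fun x : ℝ => 2 / Real.sqrt 3 * Real.sin (Real.pi * x / 3)) Filter.atTop ∧
    TendstoLocallyUniformly (fun (d : ℕ) (x : ℝ) => (-1 : ℝ) ^ d * deriv (s (2 * d + 1)) x)
      (fun x : ℝ => 2 * Real.pi / (3 * Real.sqrt 3) * Real.cos (Real.pi * x / 3))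
      Filter.atTop :=
  SOdd.s_odd_tendstoLocallyUniformly'
end
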